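/- arXiv:1509.09179 — 13 statements merged into one kernel-verified Lean document; each statement's English description precedes it below -/
import Mathlib

section
/- For every n ≥ 1 and m ≥ 0, the expected sojourn time at the second queue satisfies the closed recursive formula T₂(n,m) = (μ₂/(μ₁+μ₂))^m · T₂(n-1,1) + (μ₁/(μ₁+μ₂)) · Σ_{j=0}^{m-1} (μ₂/(μ₁+μ₂))^j · T₂(n-1, m+1-j), and T₂(0,m) = m/μ₂ for all m ≥ 0. -/
/-- For every `n ≥ 1` and `m ≥ 0`, the expected sojourn time at the second queue satisfies
`T₂(n,m) = (μ₂/(μ₁+μ₂))^m · T₂(n-1,1) + (μ₁/(μ₁+μ₂)) · Σ_{j=0}^{m-1} (μ₂/(μ₁+μ₂))^j · T₂(n-1, m+1-j)`,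
and `T₂(0,m) = m/μ₂`. -/
theorem stmt_2 (μ₁ μ₂ : ℝ) (hμ₁ : 0 < μ₁) (hμ₂ : 0 < μ₂)
    (T : ℕ × ℕ → ℝ)
    (hT0 : ∀ m : ℕ, T (0, m) = m / μ₂)
    (hTb : ∀ n : ℕ, T (n + 1, 0) = 1 / μ₁ + T (n, 1))
    (hTrec : ∀ n m : ℕ, T (n + 1, m + 1) =
      1 / (μ₁ + μ₂) + μ₁ / (μ₁ + μ₂) * T (n, m + 2) + μ₂ / (μ₁ + μ₂) * T (n + 1, m))
    (T₂ : ℕ → ℕ → ℝ)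
    (hT₂ : ∀ n m : ℕ, T₂ n m = T (n, m) - n / μ₁) :
    (∀ n m : ℕ, T₂ (n + 1) m =
      (μ₂ / (μ₁ + μ₂)) ^ m * T₂ n 1 +
        μ₁ / (μ₁ + μ₂) * ∑ j ∈ Finset.range m, (μ₂ / (μ₁ + μ₂)) ^ j * T₂ n (m + 1 - j)) ∧
    (∀ m : ℕ, T₂ 0 m = m / μ₂) := by
  have hs : μ₁ + μ₂ ≠ 0 := by positivity
  have h1 : μ₁ ≠ 0 := ne_of_gt hμ₁
  have key : ∀ n m : ℕ, T₂ (n+1) (m+1) =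
      μ₁ / (μ₁ + μ₂) * T₂ n (m+2) + μ₂ / (μ₁ + μ₂) * T₂ (n+1) m := by
    intro n m
    rw [hT₂, hT₂, hT₂, hTrec]
    push_cast
    field_simp
    ring
  constructor
  · intro n m
    induction m with
    | zero =>
      simp only [Finset.range_zero, Finset.sum_empty, mul_zero, add_zero, pow_zero, one_mul]
      rw [hT₂, hT₂, hTb]
      push_cast
      field_simp
      ring
    | succ m ih =>
      rw [key, ih, Finset.sum_range_succ']
      simp only [Nat.succ_sub_succ, pow_succ, pow_zero, one_mul, Nat.sub_zero]
      have h2 : ∑ x ∈ Finset.range m, (μ₂/(μ₁+μ₂))^x * (μ₂/(μ₁+μ₂)) * T₂ n (m+1-x)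
          = (μ₂/(μ₁+μ₂)) * ∑ x ∈ Finset.range m, (μ₂/(μ₁+μ₂))^x * T₂ n (m+1-x) := by
        rw [Finset.mul_sum]
        exact Finset.sum_congr rfl fun j _ => by ring
      rw [h2, show m+1+1 = m+2 from rfl]
      ring
  · intro m
    rw [hT₂, hT0]
    simp
end

section
/- For all n, m ≥ 0 one has T(n+1, m) ≥ T(n, m+1); equivalently, for every fixed k ≥ 0 the function n ↦ T(n, k−n) is non-decreasing in n on 0 ≤ n ≤ k. -/
/-- For all `n, m ≥ 0` one has `T(n+1, m) ≥ T(n, m+1)`; equivalently, for every fixed `k ≥ 0`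
the function `n ↦ T(n, k−n)` is non-decreasing in `n` on `0 ≤ n ≤ k`. -/
theorem stmt_3 (μ₁ μ₂ : ℝ) (hμ₁ : 0 < μ₁) (hμ₂ : 0 < μ₂)
    (T : ℕ × ℕ → ℝ)
    (hT0 : ∀ m : ℕ, T (0, m) = m / μ₂)
    (hTb : ∀ n : ℕ, T (n + 1, 0) = 1 / μ₁ + T (n, 1))
    (hTrec : ∀ n m : ℕ, T (n + 1, m + 1) =
      1 / (μ₁ + μ₂) + μ₁ / (μ₁ + μ₂) * T (n, m + 2) + μ₂ / (μ₁ + μ₂) * T (n + 1, m)) :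
    (∀ n m : ℕ, T (n + 1, m) ≥ T (n, m + 1)) ∧
    (∀ k n : ℕ, n + 1 ≤ k → T (n + 1, k - (n + 1)) ≥ T (n, k - n)) := by
  have hs : (0:ℝ) < μ₁ + μ₂ := by linarith
  have ha : (0:ℝ) < μ₁ / (μ₁ + μ₂) := by positivity
  have hb : (0:ℝ) < μ₂ / (μ₁ + μ₂) := by positivity
  have key : ∀ n m : ℕ, T (n, m + 1) ≤ T (n + 1, m) := by
    intro n
    induction n with
    | zero =>
      intro m
      induction m with
      | zero =>
        rw [hTb 0]
        have : 0 < 1 / μ₁ := by positivity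
        linarith
      | succ m ihm =>
        rw [hTrec 0 m, hT0 (m + 2)]
        have h2 : ((m:ℝ) + 1) / μ₂ ≤ T (1, m) := by
          have := ihm
          rw [hT0 (m + 1)] at this
          push_cast at this
          exact this
        have h3 := mul_le_mul_of_nonneg_left h2 hb.le
        have heq : 1 / (μ₁ + μ₂) + μ₁ / (μ₁ + μ₂) * (((m:ℝ) + 2) / μ₂)
            + μ₂ / (μ₁ + μ₂) * (((m:ℝ) + 1) / μ₂) = ((m:ℝ) + 2) / μ₂ := by
          field_simp
          ring
        push_cast
        linarith
    | succ n ih =>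
      intro m
      induction m with
      | zero =>
        rw [hTb (n + 1)]
        have : 0 < 1 / μ₁ := by positivity
        linarith
      | succ m ihm =>
        have e1 := hTrec n (m + 1)
        have e2 := hTrec (n + 1) m
        have h3 := mul_le_mul_of_nonneg_left (ih (m + 2)) ha.le
        have h4 := mul_le_mul_of_nonneg_left ihm hb.le
        rw [e1, e2]
        linarith
  refine ⟨fun n m => key n m, fun k n h => ?_⟩
  have hk : k - n = (k - (n + 1)) + 1 := by omega
  rw [hk]
  exact key n (k - (n + 1))
end

section
/- The function T₂(n,m) is non-decreasing in n if and only if μ₁ ≥ μ₂; that is, T₂(n+1,m) ≥ T₂(n,m) holds for all n, m ≥ 0 precisely when μ₁ ≥ μ₂, while if μ₁ < μ₂ there exist n, m ≥ 0 with T₂(n+1,m) < T₂(n,m). -/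
/-!
Write `D n m = T (n+1, m) - T (n, m)`, so that `T₂ (n+1) m - T₂ n m = D n m - 1/μ₁`.
On the row `n = 0` the recursion can be solved explicitly:
`D 0 m = 1/μ₂ + (1/μ₁) ρ^m` with `ρ = μ₂/(μ₁+μ₂)`. Differencing the defining equations shows
that `D (n+1) 0 = D n 1` and that `D (n+1) (m+1)` is a convex combination of `D n (m+2)` and
`D (n+1) m`, so any lower bound on the row `n = 0` propagates to all of `D`. If `μ₂ ≤ μ₁` the
row `n = 0` is bounded below by `1/μ₂ ≥ 1/μ₁`; if `μ₁ < μ₂` then `D 0 m → 1/μ₂ < 1/μ₁`.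
-/

open Filter Topology

section TandemDifferences

variable {μ₁ μ₂ : ℝ} {T : ℕ × ℕ → ℝ}

theorem sub_first_row_eq (hμ₁ : 0 < μ₁) (hμ₂ : 0 < μ₂)
    (hT0 : ∀ m : ℕ, T (0, m) = m / μ₂)
    (hTb : ∀ n : ℕ, T (n + 1, 0) = 1 / μ₁ + T (n, 1))
    (hTrec : ∀ n m : ℕ, T (n + 1, m + 1) =
      1 / (μ₁ + μ₂) + μ₁ / (μ₁ + μ₂) * T (n, m + 2) + μ₂ / (μ₁ + μ₂) * T (n + 1, m))
    (m : ℕ) : T (1, m) - T (0, m) = 1 / μ₂ + 1 / μ₁ * (μ₂ / (μ₁ + μ₂)) ^ m := by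
  have hs : μ₁ + μ₂ ≠ 0 := by positivity
  induction m with
  | zero =>
    rw [hTb 0, hT0 0, hT0 1]
    push_cast
    field_simp
    ring
  | succ m ih =>
    have hT1m : T (1, m) = m / μ₂ + (1 / μ₂ + 1 / μ₁ * (μ₂ / (μ₁ + μ₂)) ^ m) := by
      rw [← ih, hT0 m]; ring
    rw [hTrec 0 m, hT0 (m + 2), hT0 (m + 1), hT1m, pow_succ]
    push_cast
    generalize (μ₂ / (μ₁ + μ₂)) ^ m = x
    field_simp
    ring

theorem sub_succ_zero (hTb : ∀ n : ℕ, T (n + 1, 0) = 1 / μ₁ + T (n, 1)) (n : ℕ) :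
    T (n + 2, 0) - T (n + 1, 0) = T (n + 1, 1) - T (n, 1) := by
  rw [hTb (n + 1), hTb n]; ring

theorem sub_succ_succ
    (hTrec : ∀ n m : ℕ, T (n + 1, m + 1) =
      1 / (μ₁ + μ₂) + μ₁ / (μ₁ + μ₂) * T (n, m + 2) + μ₂ / (μ₁ + μ₂) * T (n + 1, m))
    (n m : ℕ) :
    T (n + 2, m + 1) - T (n + 1, m + 1) =
      μ₁ / (μ₁ + μ₂) * (T (n + 1, m + 2) - T (n, m + 2)) +
        μ₂ / (μ₁ + μ₂) * (T (n + 2, m) - T (n + 1, m)) := by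
  rw [hTrec (n + 1) m, hTrec n m]; ring

theorem le_sub_of_le_first_row (hμ₁ : 0 < μ₁) (hμ₂ : 0 < μ₂)
    (hTb : ∀ n : ℕ, T (n + 1, 0) = 1 / μ₁ + T (n, 1))
    (hTrec : ∀ n m : ℕ, T (n + 1, m + 1) =
      1 / (μ₁ + μ₂) + μ₁ / (μ₁ + μ₂) * T (n, m + 2) + μ₂ / (μ₁ + μ₂) * T (n + 1, m))
    {c : ℝ} (h0 : ∀ m : ℕ, c ≤ T (1, m) - T (0, m)) (n m : ℕ) :
    c ≤ T (n + 1, m) - T (n, m) := by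
  induction n generalizing m with
  | zero => exact h0 m
  | succ n ih =>
    induction m with
    | zero => rw [sub_succ_zero hTb]; exact ih 1
    | succ m ihm =>
      have hconvex : c = μ₁ / (μ₁ + μ₂) * c + μ₂ / (μ₁ + μ₂) * c := by
        field_simp
      rw [sub_succ_succ hTrec, hconvex]
      gcongr
      exact ih (m + 2)

end TandemDifferences

/-- The function `T₂(n,m)` is non-decreasing in `n` if and only if `μ₁ ≥ μ₂`. -/
theorem stmt_4 (μ₁ μ₂ : ℝ) (hμ₁ : 0 < μ₁) (hμ₂ : 0 < μ₂)
    (T : ℕ × ℕ → ℝ)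
    (hT0 : ∀ m : ℕ, T (0, m) = m / μ₂)
    (hTb : ∀ n : ℕ, T (n + 1, 0) = 1 / μ₁ + T (n, 1))
    (hTrec : ∀ n m : ℕ, T (n + 1, m + 1) =
      1 / (μ₁ + μ₂) + μ₁ / (μ₁ + μ₂) * T (n, m + 2) + μ₂ / (μ₁ + μ₂) * T (n + 1, m))
    (T₂ : ℕ → ℕ → ℝ)
    (hT₂ : ∀ n m : ℕ, T₂ n m = T (n, m) - n / μ₁) :
    ((∀ n m : ℕ, T₂ (n + 1) m ≥ T₂ n m) ↔ μ₁ ≥ μ₂) ∧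
    (μ₁ < μ₂ → ∃ n m : ℕ, T₂ (n + 1) m < T₂ n m) := by
  have hT₂_sub (n m : ℕ) : T₂ (n + 1) m - T₂ n m = T (n + 1, m) - T (n, m) - 1 / μ₁ := by
    rw [hT₂, hT₂]; push_cast; ring
  have hrow := sub_first_row_eq hμ₁ hμ₂ hT0 hTb hTrec
  have hmono (hle : μ₂ ≤ μ₁) (n m : ℕ) : T₂ (n + 1) m ≥ T₂ n m := by
    have h0 (m : ℕ) : 1 / μ₁ ≤ T (1, m) - T (0, m) := by
      rw [hrow]
      have : 0 ≤ 1 / μ₁ * (μ₂ / (μ₁ + μ₂)) ^ m := by positivity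
      linarith [one_div_le_one_div_of_le hμ₂ hle]
    linarith [hT₂_sub n m, le_sub_of_le_first_row hμ₁ hμ₂ hTb hTrec h0 n m]
  have hdrop (hlt : μ₁ < μ₂) : ∃ n m : ℕ, T₂ (n + 1) m < T₂ n m := by
    have hlim : Tendsto (fun m : ℕ => T (1, m) - T (0, m)) atTop (𝓝 (1 / μ₂ + 1 / μ₁ * 0)) := by
      simp_rw [hrow]
      exact tendsto_const_nhds.add (tendsto_const_nhds.mul
        (tendsto_pow_atTop_nhds_zero_of_lt_one (by positivity) (by rw [div_lt_one]; all_goals linarith)))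
    have hlt' : 1 / μ₂ + 1 / μ₁ * 0 < 1 / μ₁ := by
      rw [mul_zero, add_zero]; exact one_div_lt_one_div_of_lt hμ₁ hlt
    obtain ⟨m, hm⟩ := (hlim.eventually (gt_mem_nhds hlt')).exists
    exact ⟨0, m, by linarith [hT₂_sub 0 m]⟩
  refine ⟨⟨fun h => ?_, hmono⟩, hdrop⟩
  by_contra hlt
  obtain ⟨n, m, hnm⟩ := hdrop (not_le.mp hlt)
  exact (h n m).not_gt hnm
end

section
/- Define Δ₁T₂(n,m) = T₂(n+1,m) − T₂(n,m). Then for every n ≥ 1 and m ≥ 0, Δ₁T₂(n,m) = (μ₂/(μ₁+μ₂))^m · Δ₁T₂(n-1,1) + (μ₁/(μ₁+μ₂)) · Σ_{j=0}^{m-1} (μ₂/(μ₁+μ₂))^j · Δ₁T₂(n-1, m+1-j). -/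
/-- With `Δ₁T₂(n,m) = T₂(n+1,m) − T₂(n,m)`, for every `n ≥ 1` and `m ≥ 0`,
`Δ₁T₂(n,m) = (μ₂/(μ₁+μ₂))^m · Δ₁T₂(n-1,1)
  + (μ₁/(μ₁+μ₂)) · Σ_{j=0}^{m-1} (μ₂/(μ₁+μ₂))^j · Δ₁T₂(n-1, m+1-j)`. -/
theorem stmt_5 (μ₁ μ₂ : ℝ) (hμ₁ : 0 < μ₁) (hμ₂ : 0 < μ₂)
    (T : ℕ × ℕ → ℝ)
    (hT0 : ∀ m : ℕ, T (0, m) = m / μ₂)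
    (hTb : ∀ n : ℕ, T (n + 1, 0) = 1 / μ₁ + T (n, 1))
    (hTrec : ∀ n m : ℕ, T (n + 1, m + 1) =
      1 / (μ₁ + μ₂) + μ₁ / (μ₁ + μ₂) * T (n, m + 2) + μ₂ / (μ₁ + μ₂) * T (n + 1, m))
    (T₂ : ℕ → ℕ → ℝ)
    (hT₂ : ∀ n m : ℕ, T₂ n m = T (n, m) - n / μ₁)
    (Δ₁T₂ : ℕ → ℕ → ℝ)
    (hΔ : ∀ n m : ℕ, Δ₁T₂ n m = T₂ (n + 1) m - T₂ n m) :
    ∀ n m : ℕ, Δ₁T₂ (n + 1) m =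
      (μ₂ / (μ₁ + μ₂)) ^ m * Δ₁T₂ n 1 +
        μ₁ / (μ₁ + μ₂) * ∑ j ∈ Finset.range m, (μ₂ / (μ₁ + μ₂)) ^ j * Δ₁T₂ n (m + 1 - j) := by
  have hs : (0:ℝ) < μ₁ + μ₂ := by linarith
  have hab : μ₁ / (μ₁ + μ₂) + μ₂ / (μ₁ + μ₂) = 1 := by field_simp
  have base : ∀ n : ℕ, Δ₁T₂ (n + 1) 0 = Δ₁T₂ n 1 := by
    intro n
    have h1 := hTb (n + 1)
    have h2 := hTb n
    simp only [hΔ, hT₂]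
    push_cast
    linear_combination h1 - h2
  have key : ∀ n m : ℕ, Δ₁T₂ (n + 1) (m + 1) =
      μ₁ / (μ₁ + μ₂) * Δ₁T₂ n (m + 2) + μ₂ / (μ₁ + μ₂) * Δ₁T₂ (n + 1) m := by
    intro n m
    have h1 := hTrec (n + 1) m
    have h2 := hTrec n m
    simp only [hΔ, hT₂]
    push_cast
    linear_combination h1 - h2 + (1 / μ₁) * hab
  intro n m
  induction m with
  | zero => simp [base n]
  | succ m ih =>
    have hpeel : ∑ j ∈ Finset.range (m + 1),
        (μ₂ / (μ₁ + μ₂)) ^ j * Δ₁T₂ n (m + 1 + 1 - j)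
        = (∑ j ∈ Finset.range m,
            (μ₂ / (μ₁ + μ₂)) ^ (j + 1) * Δ₁T₂ n (m + 1 - j)) + Δ₁T₂ n (m + 2) := by
      rw [Finset.sum_range_succ']
      simp [Nat.succ_sub_succ]
    have hsum : (μ₂ / (μ₁ + μ₂)) * ∑ j ∈ Finset.range m,
        (μ₂ / (μ₁ + μ₂)) ^ j * Δ₁T₂ n (m + 1 - j)
        = ∑ j ∈ Finset.range m, (μ₂ / (μ₁ + μ₂)) ^ (j + 1) * Δ₁T₂ n (m + 1 - j) := by
      rw [Finset.mul_sum]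
      exact Finset.sum_congr rfl fun j _ => by ring
    rw [key n m, ih, hpeel]
    linear_combination (μ₁ / (μ₁ + μ₂)) * hsum
end

section
/- Let α = μ₁/μ₂. For every m ≥ 0, T₂(1,m) − T₂(0,m) = (1/μ₂)·(α − 1 + (α+1)^{−m})/α. -/
/-- With `α = μ₁/μ₂`, for every `m ≥ 0`,
`T₂(1,m) − T₂(0,m) = (1/μ₂)·(α − 1 + (α+1)^{−m})/α`. -/
theorem stmt_6 (μ₁ μ₂ : ℝ) (hμ₁ : 0 < μ₁) (hμ₂ : 0 < μ₂)
    (T : ℕ × ℕ → ℝ)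
    (hT0 : ∀ m : ℕ, T (0, m) = m / μ₂)
    (hTb : ∀ n : ℕ, T (n + 1, 0) = 1 / μ₁ + T (n, 1))
    (hTrec : ∀ n m : ℕ, T (n + 1, m + 1) =
      1 / (μ₁ + μ₂) + μ₁ / (μ₁ + μ₂) * T (n, m + 2) + μ₂ / (μ₁ + μ₂) * T (n + 1, m))
    (T₂ : ℕ → ℕ → ℝ)
    (hT₂ : ∀ n m : ℕ, T₂ n m = T (n, m) - n / μ₁)
    (α : ℝ) (hα : α = μ₁ / μ₂) :
    ∀ m : ℕ, T₂ 1 m - T₂ 0 m = 1 / μ₂ * ((α - 1 + (α + 1) ^ (-(m : ℤ))) / α) := by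
  subst hα
  have hs : (0:ℝ) < μ₁ + μ₂ := by linarith
  have hne : (μ₁ / μ₂ + 1) ≠ 0 := by positivity
  intro m
  induction m with
  | zero =>
    rw [hT₂, hT₂, hTb, hT0, hT0]
    norm_num
    field_simp
  | succ m ih =>
    have hrec := hTrec 0 m
    rw [hT0] at hrec
    have hTm : T (1, m) = (T₂ 1 m - T₂ 0 m) + 1 / μ₁ + m / μ₂ := by
      rw [hT₂, hT₂, hT0]; push_cast; ring
    rw [ih] at hTm
    have hz : (-(↑(m + 1) : ℤ)) = -(m : ℤ) + (-1) := by push_cast; ring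
    rw [hT₂, hT₂, hT0, hrec, hTm, hz, zpow_add₀ hne, zpow_neg_one]
    set x := (μ₁ / μ₂ + 1) ^ (-(m : ℤ)) with hx
    push_cast
    field_simp
    ring
end

section
/- T₂(1,m) ≥ T₂(0,m) holds for every m ≥ 0 if and only if μ₁ ≥ μ₂; moreover the sequence m ↦ T₂(1,m) − T₂(0,m) is decreasing in m. -/
/-!
Along the row `n = 1` the recursion only involves the explicit row `T(0, m) = m / μ₂`, so
`D m = T₂(1, m) − T₂(0, m) = T(1, m) − 1/μ₁ − m/μ₂` satisfies the affine recursion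
`D (m+1) = b D m + (1 − b) a` with `b = μ₂/(μ₁+μ₂)` and fixed point `a = (μ₁ − μ₂)/(μ₁ μ₂)`.
Since `D 0 = 1/μ₂`, this gives `D m = a + b^m / μ₁`, which decreases strictly to `a`;
hence `D ≥ 0` everywhere iff `a ≥ 0`, i.e. iff `μ₁ ≥ μ₂`.
-/

open Filter Topology

lemma eq_add_mul_pow_of_affine_recurrence {x : ℕ → ℝ} {a b : ℝ}
    (h : ∀ m, x (m + 1) = b * x m + (1 - b) * a) (m : ℕ) :
    x m = a + (x 0 - a) * b ^ m := by
  induction m with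
  | zero => ring
  | succ m ih => rw [h, ih]; ring

lemma strictAnti_add_mul_pow {a b c : ℝ} (hc : 0 < c) (hb₀ : 0 < b) (hb₁ : b < 1) :
    StrictAnti fun m : ℕ => a + c * b ^ m :=
  StrictAnti.const_add (fun _ _ hij => mul_lt_mul_of_pos_left
    (pow_lt_pow_right_of_lt_one₀ hb₀ hb₁ hij) hc) a

lemma forall_nonneg_add_mul_pow_iff {a b c : ℝ} (hc : 0 ≤ c) (hb₀ : 0 ≤ b) (hb₁ : b < 1) :
    (∀ m : ℕ, 0 ≤ a + c * b ^ m) ↔ 0 ≤ a := by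
  refine ⟨fun h => ?_, fun ha m => add_nonneg ha (by positivity)⟩
  have hlim : Tendsto (fun m : ℕ => a + c * b ^ m) atTop (𝓝 a) := by
    simpa using (tendsto_pow_atTop_nhds_zero_of_lt_one hb₀ hb₁).const_mul c |>.const_add a
  exact ge_of_tendsto' hlim h

lemma row_one_affine_recurrence {μ₁ μ₂ : ℝ} (hμ₁ : 0 < μ₁) (hμ₂ : 0 < μ₂) {T : ℕ × ℕ → ℝ}
    (hT0 : ∀ m : ℕ, T (0, m) = m / μ₂)
    (hTrec : ∀ m : ℕ, T (1, m + 1) =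
      1 / (μ₁ + μ₂) + μ₁ / (μ₁ + μ₂) * T (0, m + 2) + μ₂ / (μ₁ + μ₂) * T (1, m))
    (m : ℕ) :
    T (1, m + 1) - 1 / μ₁ - ((m + 1 : ℕ) : ℝ) / μ₂ =
      μ₂ / (μ₁ + μ₂) * (T (1, m) - 1 / μ₁ - m / μ₂) +
        (1 - μ₂ / (μ₁ + μ₂)) * ((μ₁ - μ₂) / (μ₁ * μ₂)) := by
  rw [hTrec, hT0]
  have : μ₁ + μ₂ ≠ 0 := by positivity
  field_simp
  push_cast
  ring

/-- `T₂(1,m) ≥ T₂(0,m)` holds for every `m ≥ 0` if and only if `μ₁ ≥ μ₂`; moreover the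
sequence `m ↦ T₂(1,m) − T₂(0,m)` is decreasing in `m`. -/
theorem stmt_7 (μ₁ μ₂ : ℝ) (hμ₁ : 0 < μ₁) (hμ₂ : 0 < μ₂)
    (T : ℕ × ℕ → ℝ)
    (hT0 : ∀ m : ℕ, T (0, m) = m / μ₂)
    (hTb : ∀ n : ℕ, T (n + 1, 0) = 1 / μ₁ + T (n, 1))
    (hTrec : ∀ n m : ℕ, T (n + 1, m + 1) =
      1 / (μ₁ + μ₂) + μ₁ / (μ₁ + μ₂) * T (n, m + 2) + μ₂ / (μ₁ + μ₂) * T (n + 1, m))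
    (T₂ : ℕ → ℕ → ℝ)
    (hT₂ : ∀ n m : ℕ, T₂ n m = T (n, m) - n / μ₁) :
    ((∀ m : ℕ, T₂ 1 m ≥ T₂ 0 m) ↔ μ₁ ≥ μ₂) ∧
    StrictAnti (fun m : ℕ => T₂ 1 m - T₂ 0 m) := by
  set a := (μ₁ - μ₂) / (μ₁ * μ₂)
  set b := μ₂ / (μ₁ + μ₂)
  have hb₀ : 0 < b := by positivity
  have hb₁ : b < 1 := (div_lt_one (by positivity)).2 (by linarith)
  have hD : ∀ m, T₂ 1 m - T₂ 0 m = T (1, m) - 1 / μ₁ - m / μ₂ := fun m => by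
    rw [hT₂, hT₂, hT0]; push_cast; ring
  have hD₀ : T₂ 1 0 - T₂ 0 0 - a = μ₁⁻¹ := by
    rw [hD, hTb, hT0]
    simp only [a]
    field_simp
    ring
  have hclosed : ∀ m, T₂ 1 m - T₂ 0 m = a + μ₁⁻¹ * b ^ m := fun m => by
    rw [eq_add_mul_pow_of_affine_recurrence (x := fun m => T₂ 1 m - T₂ 0 m) (fun m => by
      simp only [hD]; exact row_one_affine_recurrence hμ₁ hμ₂ hT0 (hTrec 0) m), hD₀]
  constructor
  · have hge : ∀ m, T₂ 1 m ≥ T₂ 0 m ↔ 0 ≤ a + μ₁⁻¹ * b ^ m := fun m => by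
      rw [ge_iff_le, ← sub_nonneg, hclosed]
    simp_rw [hge]
    rw [forall_nonneg_add_mul_pow_iff (by positivity) hb₀.le hb₁, le_div_iff₀ (by positivity),
      zero_mul, sub_nonneg]
  · simpa only [hclosed] using strictAnti_add_mul_pow (a := a) (inv_pos.2 hμ₁) hb₀ hb₁
end

section
/- For all n, m ≥ 0 one has T₂(n, m+1) ≥ T₂(n+1, m); equivalently, for every fixed k ≥ 1 the function m ↦ T₂(k−m, m) is non-decreasing in m on 0 ≤ m ≤ k. -/
/-!
Subtracting the drift `n / μ₁` turns the recursion for `T` into the homogeneous averaging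
recursion `T₂ (n+1) (m+1) = p * T₂ n (m+2) + q * T₂ (n+1) m` with `p + q = 1`, boundary
values `T₂ (n+1) 0 = T₂ n 1` and increasing initial row `T₂ 0 m = m / μ₂`. Averages of
increasing rows are increasing, so every row `T₂ n` is monotone. Then, by induction on `m`,
`T₂ (n+1) (m+1)` averages `T₂ n (m+2)` with `T₂ (n+1) m ≤ T₂ n (m+1) ≤ T₂ n (m+2)`.
-/

section AveragingRecursion

variable {U : ℕ → ℕ → ℝ} {p q : ℝ}

theorem monotone_of_averagingRecursion (hp : 0 ≤ p) (hq : 0 ≤ q) (hpq : p + q = 1)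
    (h0 : Monotone (U 0)) (hb : ∀ n, U (n + 1) 0 = U n 1)
    (hrec : ∀ n m, U (n + 1) (m + 1) = p * U n (m + 2) + q * U (n + 1) m) :
    ∀ n, Monotone (U n) := by
  intro n
  induction n with
  | zero => exact h0
  | succ n ih =>
    refine monotone_nat_of_le_succ fun m => ?_
    induction m with
    | zero =>
      have hstep : U (n + 1) 1 - U (n + 1) 0 = p * (U n 2 - U n 1) := by
        rw [hrec, zero_add, hb]; linear_combination U n 1 * hpq
      have := mul_nonneg hp (sub_nonneg.2 (ih (Nat.le_succ 1)))
      linarith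
    | succ m ihm =>
      have hstep : U (n + 1) (m + 2) - U (n + 1) (m + 1) =
          p * (U n (m + 3) - U n (m + 2)) + q * (U (n + 1) (m + 1) - U (n + 1) m) := by
        rw [hrec, hrec]; ring
      have := add_nonneg (mul_nonneg hp (sub_nonneg.2 (ih (Nat.le_succ (m + 2)))))
        (mul_nonneg hq (sub_nonneg.2 ihm))
      linarith

theorem le_shift_of_averagingRecursion (hp : 0 ≤ p) (hq : 0 ≤ q) (hpq : p + q = 1)
    (h0 : Monotone (U 0)) (hb : ∀ n, U (n + 1) 0 = U n 1)
    (hrec : ∀ n m, U (n + 1) (m + 1) = p * U n (m + 2) + q * U (n + 1) m) (n m : ℕ) :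
    U (n + 1) m ≤ U n (m + 1) := by
  have hmono := monotone_of_averagingRecursion hp hq hpq h0 hb hrec n
  induction m with
  | zero => exact (hb n).le
  | succ m ihm =>
    calc U (n + 1) (m + 1) = p * U n (m + 2) + q * U (n + 1) m := hrec n m
      _ ≤ p * U n (m + 2) + q * U n (m + 2) := by
          gcongr; exact ihm.trans (hmono (Nat.le_succ _))
      _ = U n (m + 2) := by rw [← add_mul, hpq, one_mul]

end AveragingRecursion

/-- For all `n, m ≥ 0` one has `T₂(n, m+1) ≥ T₂(n+1, m)`; equivalently, for every fixed
`k ≥ 1` the function `m ↦ T₂(k−m, m)` is non-decreasing in `m` on `0 ≤ m ≤ k`. -/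
theorem stmt_8 (μ₁ μ₂ : ℝ) (hμ₁ : 0 < μ₁) (hμ₂ : 0 < μ₂)
    (T : ℕ × ℕ → ℝ)
    (hT0 : ∀ m : ℕ, T (0, m) = m / μ₂)
    (hTb : ∀ n : ℕ, T (n + 1, 0) = 1 / μ₁ + T (n, 1))
    (hTrec : ∀ n m : ℕ, T (n + 1, m + 1) =
      1 / (μ₁ + μ₂) + μ₁ / (μ₁ + μ₂) * T (n, m + 2) + μ₂ / (μ₁ + μ₂) * T (n + 1, m))
    (T₂ : ℕ → ℕ → ℝ)
    (hT₂ : ∀ n m : ℕ, T₂ n m = T (n, m) - n / μ₁) :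
    (∀ n m : ℕ, T₂ n (m + 1) ≥ T₂ (n + 1) m) ∧
    (∀ k : ℕ, 1 ≤ k → ∀ m : ℕ, m + 1 ≤ k → T₂ (k - (m + 1)) (m + 1) ≥ T₂ (k - m) m) := by
  have hs : 0 < μ₁ + μ₂ := add_pos hμ₁ hμ₂
  have h0 : Monotone (T₂ 0) := fun a b hab => by
    simp only [hT₂, hT0, CharP.cast_eq_zero, zero_div, sub_zero]
    gcongr
  have hb : ∀ n, T₂ (n + 1) 0 = T₂ n 1 := fun n => by
    rw [hT₂, hT₂, hTb]; push_cast; ring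
  have hrec : ∀ n m, T₂ (n + 1) (m + 1) =
      μ₁ / (μ₁ + μ₂) * T₂ n (m + 2) + μ₂ / (μ₁ + μ₂) * T₂ (n + 1) m := fun n m => by
    rw [hT₂, hT₂, hT₂, hTrec]; push_cast; field_simp; ring
  have hshift : ∀ n m, T₂ (n + 1) m ≤ T₂ n (m + 1) :=
    le_shift_of_averagingRecursion (by positivity) (by positivity) (by field_simp) h0 hb hrec
  refine ⟨hshift, fun k _ m hm => ?_⟩
  rw [show k - m = k - (m + 1) + 1 by omega]
  exact hshift _ _
end

section
/- If μ₁ ≠ μ₂, then for every k ≥ 0, Σ_{n=0}^{k} ((n+1)/μ₁)·p₁(n|k) = 1/(μ₁−μ₂) − ((k+1)/μ₁)·μ₂^{k+1}/(μ₁^{k+1}−μ₂^{k+1}). -/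
/-!
With `A = ∑ₙ μ₁^(k-n) μ₂^n` and `B = ∑ₙ (n+1) μ₁^(k-n) μ₂^n`, the sum equals `B / (μ₁ A)`.
Multiplying by `μ₁ - μ₂` telescopes both sums: `(μ₁ - μ₂) A = μ₁^(k+1) - μ₂^(k+1)` and
`(μ₁ - μ₂) B = μ₁ A - (k+1) μ₂^(k+1)`, which gives the closed form.
-/

/-- `p₁(n|k)`: conditional probability that the stationary queue length at node 1 equals `n`
given `k` customers in total; `0` for `n > k`. -/
noncomputable def p1 (μ₁ μ₂ : ℝ) (n k : ℕ) : ℝ :=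
  if n ≤ k then μ₁ ^ (k - n) * μ₂ ^ n / ∑ h ∈ Finset.range (k + 1), μ₁ ^ (k - h) * μ₂ ^ h
  else 0

open Finset

section CommRing

variable {R : Type*} [CommRing R]

theorem sum_range_mul_pow_mul_pow_succ (f : ℕ → R) (x y : R) (k : ℕ) :
    ∑ n ∈ range (k + 2), f n * (x ^ (k + 1 - n) * y ^ n)
      = x * ∑ n ∈ range (k + 1), f n * (x ^ (k - n) * y ^ n) + f (k + 1) * y ^ (k + 1) := by
  rw [sum_range_succ, mul_sum, Nat.sub_self, pow_zero, one_mul]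
  congr 1
  refine sum_congr rfl fun n hn => ?_
  rw [Nat.sub_add_comm (mem_range_succ_iff.mp hn), pow_succ]
  ring

theorem sub_mul_sum_pow_mul_pow (x y : R) (k : ℕ) :
    (x - y) * ∑ n ∈ range (k + 1), x ^ (k - n) * y ^ n = x ^ (k + 1) - y ^ (k + 1) := by
  rw [← geom_sum₂_mul, geom_sum₂_comm, mul_comm, add_tsub_cancel_right]
  simp only [mul_comm]

theorem sub_mul_sum_succ_mul_pow_mul_pow (x y : R) (k : ℕ) :
    (x - y) * ∑ n ∈ range (k + 1), ((n : R) + 1) * (x ^ (k - n) * y ^ n)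
      = x * ∑ n ∈ range (k + 1), x ^ (k - n) * y ^ n - ((k : R) + 1) * y ^ (k + 1) := by
  induction k with
  | zero => simp
  | succ k ih =>
    have hA := sum_range_mul_pow_mul_pow_succ (fun _ => (1 : R)) x y k
    simp only [one_mul] at hA
    rw [sum_range_mul_pow_mul_pow_succ (fun n => (n : R) + 1), hA]
    push_cast
    linear_combination x * ih

end CommRing

theorem sum_pow_mul_pow_pos {x y : ℝ} (hx : 0 < x) (hy : 0 < y) (k : ℕ) :
    0 < ∑ n ∈ range (k + 1), x ^ (k - n) * y ^ n :=
  sum_pos (fun _ _ => by positivity) nonempty_range_add_one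

theorem sum_div_mul_p1 (μ₁ μ₂ : ℝ) (k : ℕ) :
    ∑ n ∈ range (k + 1), ((n : ℝ) + 1) / μ₁ * p1 μ₁ μ₂ n k
      = (∑ n ∈ range (k + 1), ((n : ℝ) + 1) * (μ₁ ^ (k - n) * μ₂ ^ n))
        / (μ₁ * ∑ n ∈ range (k + 1), μ₁ ^ (k - n) * μ₂ ^ n) := by
  rw [sum_div]
  refine sum_congr rfl fun n hn => ?_
  rw [p1, if_pos (mem_range_succ_iff.mp hn), div_mul_div_comm]

/-- If `μ₁ ≠ μ₂`, then for every `k ≥ 0`,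
`Σ_{n=0}^{k} ((n+1)/μ₁)·p₁(n|k) = 1/(μ₁−μ₂) − ((k+1)/μ₁)·μ₂^{k+1}/(μ₁^{k+1}−μ₂^{k+1})`. -/
theorem stmt_10 (μ₁ μ₂ : ℝ) (hμ₁ : 0 < μ₁) (hμ₂ : 0 < μ₂) (hne : μ₁ ≠ μ₂) :
    ∀ k : ℕ, ∑ n ∈ Finset.range (k + 1), ((n : ℝ) + 1) / μ₁ * p1 μ₁ μ₂ n k =
      1 / (μ₁ - μ₂) - ((k : ℝ) + 1) / μ₁ * μ₂ ^ (k + 1) / (μ₁ ^ (k + 1) - μ₂ ^ (k + 1)) := by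
  intro k
  rw [sum_div_mul_p1, ← sub_mul_sum_pow_mul_pow]
  have hB := sub_mul_sum_succ_mul_pow_mul_pow μ₁ μ₂ k
  have hA := (sum_pow_mul_pow_pos hμ₁ hμ₂ k).ne'
  have hsub : μ₁ - μ₂ ≠ 0 := sub_ne_zero.mpr hne
  generalize ∑ n ∈ range (k + 1), μ₁ ^ (k - n) * μ₂ ^ n = A at *
  generalize ∑ n ∈ range (k + 1), ((n : ℝ) + 1) * (μ₁ ^ (k - n) * μ₂ ^ n) = B at *
  field_simp
  linear_combination hB
end

section
/- For each l ∈ {1,2}, the random variables Q*_l(k) with distribution p_l(·|k) are stochastically increasing in k: for all k ≥ 0 and all j ≥ 0, Σ_{n=j}^{k+1} p_l(n|k+1) ≥ Σ_{n=j}^{k} p_l(n|k). -/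
/-- `p₂(n|k)`: conditional probability that the stationary queue length at node 2 equals `n`
given `k` customers in total; `0` for `n > k`. -/
noncomputable def p2 (μ₁ μ₂ : ℝ) (n k : ℕ) : ℝ :=
  if n ≤ k then μ₂ ^ (k - n) * μ₁ ^ n / ∑ h ∈ Finset.range (k + 1), μ₂ ^ (k - h) * μ₁ ^ h
  else 0

lemma p1_key (μ ν : ℝ) (hμ : 0 < μ) (hν : 0 < ν) (k j : ℕ) :
    ∑ n ∈ Finset.Icc j (k + 1), p1 μ ν n (k + 1) ≥ ∑ n ∈ Finset.Icc j k, p1 μ ν n k := by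
  have hSpos : ∀ m : ℕ, 0 < ∑ h ∈ Finset.range (m + 1), μ ^ (m - h) * ν ^ h := by
    intro m
    apply Finset.sum_pos
    · intro i _; positivity
    · exact ⟨0, Finset.mem_range.mpr (Nat.succ_pos m)⟩
  set S : ℕ → ℝ := fun m => ∑ h ∈ Finset.range (m + 1), μ ^ (m - h) * ν ^ h with hS
  have hSrec : ∀ m : ℕ, S (m + 1) = μ * S m + ν ^ (m + 1) := by
    intro m
    have : S (m + 1) = (∑ h ∈ Finset.range (m + 1), μ ^ (m + 1 - h) * ν ^ h) + ν ^ (m + 1) := by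
      simp [hS, Finset.sum_range_succ]
    rw [this]
    congr 1
    rw [Finset.mul_sum]
    apply Finset.sum_congr rfl
    intro h hh
    have : h ≤ m := Nat.lt_succ_iff.mp (Finset.mem_range.mp hh)
    rw [show m + 1 - h = (m - h) + 1 by omega, pow_succ]
    ring
  -- rewrite the sums over Icc using the if_pos branch
  have hsum : ∀ m : ℕ, ∀ j : ℕ,
      ∑ n ∈ Finset.Icc j m, p1 μ ν n m = (∑ n ∈ Finset.Icc j m, μ ^ (m - n) * ν ^ n) / S m := by
    intro m j
    rw [Finset.sum_div]
    apply Finset.sum_congr rfl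
    intro n hn
    have := (Finset.mem_Icc.mp hn).2
    simp [p1, this, hS]
  rw [hsum, hsum]
  by_cases hj : j ≤ k + 1
  · have hArec : (∑ n ∈ Finset.Icc j (k + 1), μ ^ (k + 1 - n) * ν ^ n)
        = μ * (∑ n ∈ Finset.Icc j k, μ ^ (k - n) * ν ^ n) + ν ^ (k + 1) := by
      rw [Finset.sum_Icc_succ_top hj]
      simp only [Nat.sub_self, pow_zero, one_mul]
      congr 1
      rw [Finset.mul_sum]
      apply Finset.sum_congr rfl
      intro n hn
      have : n ≤ k := (Finset.mem_Icc.mp hn).2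
      rw [show k + 1 - n = (k - n) + 1 by omega, pow_succ]
      ring
    have hAle : (∑ n ∈ Finset.Icc j k, μ ^ (k - n) * ν ^ n) ≤ S k := by
      apply Finset.sum_le_sum_of_subset_of_nonneg
      · intro n hn
        have := (Finset.mem_Icc.mp hn).2
        exact Finset.mem_range.mpr (by omega)
      · intro i _ _; positivity
    have hAnn : 0 ≤ (∑ n ∈ Finset.Icc j k, μ ^ (k - n) * ν ^ n) := by
      apply Finset.sum_nonneg; intro i _; positivity
    rw [hArec, hSrec, ge_iff_le,
      div_le_div_iff₀ (hSpos k) (add_pos (mul_pos hμ (hSpos k)) (by positivity))]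
    have hνp : (0:ℝ) < ν ^ (k + 1) := by positivity
    nlinarith [mul_le_mul_of_nonneg_left hAle (le_of_lt hνp), hSpos k]
  · -- j > k + 1 : both sums empty
    have h1 : Finset.Icc j (k + 1) = ∅ := Finset.Icc_eq_empty (by omega)
    have h2 : Finset.Icc j k = ∅ := Finset.Icc_eq_empty (by omega)
    simp [h1, h2]

/-- For each `l ∈ {1,2}` the random variables `Q*_l(k)` with distribution `p_l(·|k)` are
stochastically increasing in `k`: for all `k ≥ 0` and `j ≥ 0`,
`Σ_{n=j}^{k+1} p_l(n|k+1) ≥ Σ_{n=j}^{k} p_l(n|k)`. -/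
theorem stmt_14 (μ₁ μ₂ : ℝ) (hμ₁ : 0 < μ₁) (hμ₂ : 0 < μ₂) :
    ∀ p ∈ ({p1 μ₁ μ₂, p2 μ₁ μ₂} : Set (ℕ → ℕ → ℝ)),
      ∀ k j : ℕ,
        ∑ n ∈ Finset.Icc j (k + 1), p n (k + 1) ≥ ∑ n ∈ Finset.Icc j k, p n k := by
  intro p hp k j
  rcases hp with h | h
  · subst h; exact p1_key μ₁ μ₂ hμ₁ hμ₂ k j
  · simp only [Set.mem_singleton_iff] at h
    subst h
    have hpp : p2 μ₁ μ₂ = p1 μ₂ μ₁ := rfl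
    rw [hpp]
    exact p1_key μ₂ μ₁ hμ₂ hμ₁ k j
end

section
/- The function T₁(k) = Σ_{n=0}^{k} ((n+1)/μ₁)·p₁(n|k) is non-decreasing in k, i.e. T₁(k+1) ≥ T₁(k) for all k ≥ 0. -/
/-- The expected sojourn time at the first node,
`T₁(k) = Σ_{n=0}^{k} ((n+1)/μ₁)·p₁(n|k)`, is non-decreasing in `k`. -/
theorem stmt_16 (μ₁ μ₂ : ℝ) (hμ₁ : 0 < μ₁) (hμ₂ : 0 < μ₂) :
    ∀ k : ℕ,
      ∑ n ∈ Finset.range (k + 2), ((n : ℝ) + 1) / μ₁ * p1 μ₁ μ₂ n (k + 1) ≥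
        ∑ n ∈ Finset.range (k + 1), ((n : ℝ) + 1) / μ₁ * p1 μ₁ μ₂ n k := by
  intro k
  have hDpos : ∀ m : ℕ, 0 < ∑ h ∈ Finset.range (m + 1), μ₁ ^ (m - h) * μ₂ ^ h := by
    intro m
    exact Finset.sum_pos (fun h _ => by positivity) ⟨0, by simp⟩
  have hsum : ∀ m : ℕ, ∑ n ∈ Finset.range (m + 1), ((n : ℝ) + 1) / μ₁ * p1 μ₁ μ₂ n m
      = (∑ n ∈ Finset.range (m + 1), ((n : ℝ) + 1) * (μ₁ ^ (m - n) * μ₂ ^ n)) /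
        (μ₁ * ∑ h ∈ Finset.range (m + 1), μ₁ ^ (m - h) * μ₂ ^ h) := by
    intro m
    rw [Finset.sum_div]
    refine Finset.sum_congr rfl fun n hn => ?_
    have hnk : n ≤ m := Nat.lt_succ_iff.mp (Finset.mem_range.mp hn)
    rw [p1, if_pos hnk]
    have h1 := (hDpos m).ne'
    field_simp
  rw [ge_iff_le, hsum k, show k + 2 = (k + 1) + 1 from rfl, hsum (k + 1)]
  set Dk := ∑ h ∈ Finset.range (k + 1), μ₁ ^ (k - h) * μ₂ ^ h with hDk
  set Dk1 := ∑ h ∈ Finset.range (k + 1 + 1), μ₁ ^ (k + 1 - h) * μ₂ ^ h with hDk1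
  set B := ∑ n ∈ Finset.range (k + 1), ((n : ℝ) + 1) * (μ₁ ^ (k - n) * μ₂ ^ n) with hB
  set A := ∑ n ∈ Finset.range (k + 1 + 1), ((n : ℝ) + 1) * (μ₁ ^ (k + 1 - n) * μ₂ ^ n) with hA
  have hDrec : Dk1 = μ₁ * Dk + μ₂ ^ (k + 1) := by
    rw [hDk1, Finset.sum_range_succ, hDk, Finset.mul_sum]
    congr 1
    · refine Finset.sum_congr rfl fun h hh => ?_
      have : h ≤ k := Nat.lt_succ_iff.mp (Finset.mem_range.mp hh)
      rw [show k + 1 - h = (k - h) + 1 from by omega, pow_succ]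
      ring
    · simp
  have hArec : A = μ₁ * B + ((k : ℝ) + 2) * μ₂ ^ (k + 1) := by
    rw [hA, Finset.sum_range_succ, hB, Finset.mul_sum]
    congr 1
    · refine Finset.sum_congr rfl fun n hn => ?_
      have : n ≤ k := Nat.lt_succ_iff.mp (Finset.mem_range.mp hn)
      rw [show k + 1 - n = (k - n) + 1 from by omega, pow_succ]
      ring
    · rw [Nat.sub_self, pow_zero]
      push_cast
      ring
  have hBle : B ≤ ((k : ℝ) + 2) * Dk := by
    rw [hDk, Finset.mul_sum, hB]
    refine Finset.sum_le_sum fun n hn => ?_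
    have hnk : n ≤ k := Nat.lt_succ_iff.mp (Finset.mem_range.mp hn)
    have hcoef : ((n : ℝ) + 1) ≤ (k : ℝ) + 2 := by
      have : (n : ℝ) ≤ (k : ℝ) := by exact_mod_cast hnk
      linarith
    have hpos : 0 ≤ μ₁ ^ (k - n) * μ₂ ^ n := by positivity
    nlinarith
  have hDkpos : 0 < Dk := hDpos k
  have hDk1pos : 0 < Dk1 := hDpos (k + 1)
  rw [div_le_div_iff₀ (by positivity) (by positivity)]
  have hpow : 0 < μ₂ ^ (k + 1) := pow_pos hμ₂ (k + 1)
  rw [hDrec, hArec]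
  nlinarith [mul_le_mul_of_nonneg_left (mul_le_mul_of_nonneg_left hBle hpow.le) hμ₁.le]
end

section
/- The function T(k) = Σ_{n=0}^{k} T(n+1, k−n)·p₁(n|k) is non-decreasing in k, i.e. T(k+1) ≥ T(k) for all k ≥ 0, for all values of μ₁, μ₂ > 0. -/
open Finset

section Stationary

variable {μ₁ μ₂ : ℝ}

noncomputable def p1Denom (μ₁ μ₂ : ℝ) (k : ℕ) : ℝ :=
  ∑ h ∈ range (k + 1), μ₁ ^ (k - h) * μ₂ ^ h

theorem p1_of_le {n k : ℕ} (h : n ≤ k) :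
    p1 μ₁ μ₂ n k = μ₁ ^ (k - n) * μ₂ ^ n / p1Denom μ₁ μ₂ k :=
  if_pos h

theorem p1Denom_pos (hμ₁ : 0 < μ₁) (hμ₂ : 0 < μ₂) (k : ℕ) : 0 < p1Denom μ₁ μ₂ k :=
  sum_pos (fun _ _ => by positivity) nonempty_range_add_one

theorem p1Denom_succ (k : ℕ) :
    p1Denom μ₁ μ₂ (k + 1) = μ₁ * p1Denom μ₁ μ₂ k + μ₂ ^ (k + 1) := by
  rw [p1Denom, sum_range_succ, Nat.sub_self, pow_zero, one_mul, p1Denom, mul_sum]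
  congr 1
  refine sum_congr rfl fun h hh => ?_
  rw [Nat.sub_add_comm (mem_range_succ_iff.1 hh), pow_succ]
  ring

theorem p1_nonneg (hμ₁ : 0 < μ₁) (hμ₂ : 0 < μ₂) (n k : ℕ) : 0 ≤ p1 μ₁ μ₂ n k := by
  unfold p1
  split_ifs
  · exact div_nonneg (by positivity) (p1Denom_pos hμ₁ hμ₂ k).le
  · exact le_rfl

theorem sum_p1 (hμ₁ : 0 < μ₁) (hμ₂ : 0 < μ₂) (k : ℕ) :
    ∑ n ∈ range (k + 1), p1 μ₁ μ₂ n k = 1 := by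
  rw [sum_congr rfl fun n hn => p1_of_le (mem_range_succ_iff.1 hn), ← sum_div]
  exact div_self (p1Denom_pos hμ₁ hμ₂ k).ne'

theorem sum_mul_p1_le_sum_mul_p1 (hμ₁ : 0 < μ₁) (hμ₂ : 0 < μ₂) {k : ℕ} {f g : ℕ → ℝ}
    (hfg : ∀ n ≤ k, f n ≤ g n) :
    ∑ n ∈ range (k + 1), f n * p1 μ₁ μ₂ n k ≤ ∑ n ∈ range (k + 1), g n * p1 μ₁ μ₂ n k :=
  sum_le_sum fun n hn =>
    mul_le_mul_of_nonneg_right (hfg n (mem_range_succ_iff.1 hn)) (p1_nonneg hμ₁ hμ₂ n k)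

theorem sum_mul_p1_le (hμ₁ : 0 < μ₁) (hμ₂ : 0 < μ₂) {k : ℕ} {f : ℕ → ℝ} {M : ℝ}
    (hf : ∀ n ≤ k, f n ≤ M) :
    ∑ n ∈ range (k + 1), f n * p1 μ₁ μ₂ n k ≤ M := by
  calc ∑ n ∈ range (k + 1), f n * p1 μ₁ μ₂ n k
      ≤ ∑ n ∈ range (k + 1), M * p1 μ₁ μ₂ n k := sum_mul_p1_le_sum_mul_p1 hμ₁ hμ₂ hf
    _ = M := by rw [← mul_sum, sum_p1 hμ₁ hμ₂, mul_one]

theorem exists_sum_mul_p1_succ_eq (hμ₁ : 0 < μ₁) (hμ₂ : 0 < μ₂) (k : ℕ) :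
    ∃ t : ℝ, 0 ≤ t ∧ t ≤ 1 ∧ ∀ f : ℕ → ℝ,
      ∑ n ∈ range (k + 2), f n * p1 μ₁ μ₂ n (k + 1) =
        t * ∑ n ∈ range (k + 1), f n * p1 μ₁ μ₂ n k + (1 - t) * f (k + 1) := by
  have hZ := p1Denom_pos hμ₁ hμ₂ k
  have hZ' := p1Denom_pos hμ₁ hμ₂ (k + 1)
  have hsucc := p1Denom_succ (μ₁ := μ₁) (μ₂ := μ₂) k
  refine ⟨μ₁ * p1Denom μ₁ μ₂ k / p1Denom μ₁ μ₂ (k + 1), by positivity, ?_, fun f => ?_⟩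
  · rw [div_le_one hZ', hsucc]
    linarith [pow_pos hμ₂ (k + 1)]
  · rw [sum_range_succ, mul_sum, p1_of_le le_rfl, Nat.sub_self, pow_zero, one_mul]
    congr 1
    · refine sum_congr rfl fun n hn => ?_
      have hn := mem_range_succ_iff.1 hn
      rw [p1_of_le hn, p1_of_le (by omega : n ≤ k + 1), Nat.sub_add_comm hn, pow_succ]
      field_simp
    · rw [hsucc]
      field_simp
      ring

end Stationary

structure IsTandemSojourn (μ₁ μ₂ : ℝ) (T : ℕ × ℕ → ℝ) : Prop where
  zero_left : ∀ m : ℕ, T (0, m) = m / μ₂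
  succ_zero : ∀ n : ℕ, T (n + 1, 0) = 1 / μ₁ + T (n, 1)
  succ_succ : ∀ n m : ℕ, T (n + 1, m + 1) =
    1 / (μ₁ + μ₂) + μ₁ / (μ₁ + μ₂) * T (n, m + 2) + μ₂ / (μ₁ + μ₂) * T (n + 1, m)

theorem le_of_fst_le_of_add_eq {α : Type*} [Preorder α] {f : ℕ × ℕ → α}
    (hstep : ∀ n m, f (n, m + 1) ≤ f (n + 1, m)) {a b c d : ℕ} (hac : a ≤ c)
    (hsum : a + b = c + d) : f (a, b) ≤ f (c, d) := by
  obtain ⟨j, rfl⟩ := Nat.exists_eq_add_of_le hac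
  obtain rfl : b = d + j := by omega
  clear hac hsum
  induction j generalizing a with
  | zero => exact le_rfl
  | succ j ih =>
    calc f (a, d + (j + 1)) ≤ f (a + 1, d + j) := hstep a (d + j)
      _ ≤ f (a + 1 + j, d) := ih
      _ = f (a + (j + 1), d) := by rw [add_assoc, add_comm 1 j]

namespace IsTandemSojourn

variable {μ₁ μ₂ : ℝ} {T : ℕ × ℕ → ℝ}

theorem monotone_right (hT : IsTandemSojourn μ₁ μ₂ T) (hμ₁ : 0 < μ₁) (hμ₂ : 0 < μ₂) (n : ℕ) :
    Monotone fun m => T (n, m) := by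
  induction n with
  | zero =>
    refine monotone_nat_of_le_succ fun m => ?_
    simp only [hT.zero_left, Nat.cast_succ]
    gcongr
    exact le_add_of_nonneg_right zero_le_one
  | succ n ih =>
    refine monotone_nat_of_le_succ fun m => ?_
    induction m with
    | zero =>
      have hfix : T (n + 1, 0) = 1 / (μ₁ + μ₂) + μ₁ / (μ₁ + μ₂) * T (n, 1)
          + μ₂ / (μ₁ + μ₂) * T (n + 1, 0) := by
        rw [hT.succ_zero]
        field_simp
      have : T (n, 1) ≤ T (n, 2) := ih (Nat.le_succ 1)
      calc T (n + 1, 0) = _ := hfix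
        _ ≤ T (n + 1, 1) := by rw [hT.succ_succ]; gcongr
    | succ m ihm =>
      have : T (n, m + 2) ≤ T (n, m + 3) := ih (Nat.le_succ _)
      rw [hT.succ_succ n m, hT.succ_succ n (m + 1)]
      gcongr

theorem succ_right_le_succ_left (hT : IsTandemSojourn μ₁ μ₂ T) (hμ₁ : 0 < μ₁) (hμ₂ : 0 < μ₂)
    (n m : ℕ) : T (n, m + 1) ≤ T (n + 1, m) := by
  induction n generalizing m with
  | zero =>
    induction m with
    | zero => rw [hT.succ_zero]; linarith [one_div_pos.2 hμ₁]
    | succ m ihm =>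
      have hzero_rec : T (0, m + 2) = 1 / (μ₁ + μ₂) + μ₁ / (μ₁ + μ₂) * T (0, m + 2)
          + μ₂ / (μ₁ + μ₂) * T (0, m + 1) := by
        simp only [hT.zero_left]
        push_cast
        field_simp
        ring
      calc T (0, m + 2) = _ := hzero_rec
        _ ≤ T (1, m + 1) := by rw [hT.succ_succ]; gcongr
  | succ n ih =>
    induction m with
    | zero => rw [hT.succ_zero]; linarith [one_div_pos.2 hμ₁]
    | succ m ihm =>
      have := ih (m + 2)
      rw [hT.succ_succ n (m + 1), hT.succ_succ (n + 1) m]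
      gcongr

end IsTandemSojourn

/-- The total expected sojourn time `T(k) = Σ_{n=0}^{k} T(n+1, k−n)·p₁(n|k)` is
non-decreasing in `k`, for all values of `μ₁, μ₂ > 0`. -/
theorem stmt_17 (μ₁ μ₂ : ℝ) (hμ₁ : 0 < μ₁) (hμ₂ : 0 < μ₂)
    (T : ℕ × ℕ → ℝ)
    (hT0 : ∀ m : ℕ, T (0, m) = m / μ₂)
    (hTb : ∀ n : ℕ, T (n + 1, 0) = 1 / μ₁ + T (n, 1))
    (hTrec : ∀ n m : ℕ, T (n + 1, m + 1) =
      1 / (μ₁ + μ₂) + μ₁ / (μ₁ + μ₂) * T (n, m + 2) + μ₂ / (μ₁ + μ₂) * T (n + 1, m)) :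
    ∀ k : ℕ,
      ∑ n ∈ Finset.range (k + 2), T (n + 1, k + 1 - n) * p1 μ₁ μ₂ n (k + 1) ≥
        ∑ n ∈ Finset.range (k + 1), T (n + 1, k - n) * p1 μ₁ μ₂ n k := by
  intro k
  have hT : IsTandemSojourn μ₁ μ₂ T := ⟨hT0, hTb, hTrec⟩
  obtain ⟨t, ht₀, ht₁, hmix⟩ := exists_sum_mul_p1_succ_eq hμ₁ hμ₂ k
  rw [hmix fun n => T (n + 1, k + 1 - n), Nat.sub_self, ge_iff_le]
  have hshift : ∀ n ≤ k, T (n + 1, k - n) ≤ T (n + 1, k + 1 - n) := fun n _ =>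
    hT.monotone_right hμ₁ hμ₂ (n + 1) (by omega)
  have htop : ∀ n ≤ k, T (n + 1, k - n) ≤ T (k + 1 + 1, 0) := fun n hn =>
    (hshift n hn).trans <| le_of_fst_le_of_add_eq (hT.succ_right_le_succ_left hμ₁ hμ₂)
      (by omega) (by omega)
  have h₁ := mul_le_mul_of_nonneg_left (sum_mul_p1_le_sum_mul_p1 hμ₁ hμ₂ hshift) ht₀
  have h₂ := mul_le_mul_of_nonneg_left (sum_mul_p1_le hμ₁ hμ₂ htop) (sub_nonneg.2 ht₁)
  linarith
end

section
/- If μ₁ ≥ μ₂, then the function T₂(k) = Σ_{n=0}^{k} T₂(n+1, k−n)·p₁(n|k) is non-decreasing in k, i.e. T₂(k+1) ≥ T₂(k) for all k ≥ 0. -/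
open Finset

section ProductFormSum

variable {R : Type*}

noncomputable def productFormSum [CommSemiring R] (x y : R) (f : ℕ → ℕ → R) (k : ℕ) : R :=
  ∑ p ∈ antidiagonal k, f p.1 p.2 * (x ^ p.2 * y ^ p.1)

section CommSemiring

variable [CommSemiring R] (x y : R) (f : ℕ → ℕ → R)

theorem productFormSum_zero : productFormSum x y f 0 = f 0 0 := by
  simp [productFormSum]

theorem productFormSum_succ (k : ℕ) :
    productFormSum x y f (k + 1) =
      f 0 (k + 1) * x ^ (k + 1) + y * productFormSum x y (fun n m => f (n + 1) m) k := by
  simp only [productFormSum, Nat.sum_antidiagonal_succ, mul_sum]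
  simp only [pow_zero, mul_one, pow_succ]
  congr 1
  exact sum_congr rfl fun p _ => by ring

theorem productFormSum_succ' (k : ℕ) :
    productFormSum x y f (k + 1) =
      f (k + 1) 0 * y ^ (k + 1) + x * productFormSum x y (fun n m => f n (m + 1)) k := by
  simp only [productFormSum, Nat.sum_antidiagonal_succ', mul_sum]
  simp only [pow_zero, one_mul, pow_succ]
  congr 1
  exact sum_congr rfl fun p _ => by ring

end CommSemiring

variable [CommRing R] {x y : R} {U : ℕ → ℕ → R}

theorem productFormSum_succ_of_rec (hb : ∀ n, U (n + 1) 0 = U n 1)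
    (hi : ∀ n m, (x + y) * U (n + 1) (m + 1) = x * U n (m + 2) + y * U (n + 1) m) (k : ℕ) :
    productFormSum x y (fun n m => U (n + 1) m) (k + 1) =
      U 0 (k + 2) * x ^ (k + 1) + y * productFormSum x y (fun n m => U (n + 1) m) k := by
  have hsum : (x + y) * productFormSum x y (fun n m => U (n + 1) (m + 1)) k =
      x * productFormSum x y (fun n m => U n (m + 2)) k +
        y * productFormSum x y (fun n m => U (n + 1) m) k := by
    simp only [productFormSum, mul_sum, ← sum_add_distrib]
    exact sum_congr rfl fun p _ => by linear_combination (x ^ p.2 * y ^ p.1) * hi p.1 p.2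
  have hpeel := productFormSum_succ' x y (fun n m => U (n + 1) m) k
  have hleft := productFormSum_succ x y (fun n m => U n (m + 1)) k
  have hright := productFormSum_succ' x y (fun n m => U n (m + 1)) k
  simp only [hb] at hpeel
  simp only [zero_add, add_assoc, Nat.reduceAdd] at hleft hright
  linear_combination hpeel + hleft - hright + hsum

theorem productFormSum_eq_of_rec (hb : ∀ n, U (n + 1) 0 = U n 1)
    (hi : ∀ n m, (x + y) * U (n + 1) (m + 1) = x * U n (m + 2) + y * U (n + 1) m) (k : ℕ) :
    productFormSum x y (fun n m => U (n + 1) m) k =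
      productFormSum x y (fun _ m => U 0 (m + 1)) k := by
  induction k with
  | zero => simp [productFormSum_zero, hb]
  | succ k ih => rw [productFormSum_succ_of_rec hb hi, productFormSum_succ, ih]

end ProductFormSum

theorem sum_mul_p1 (x y : ℝ) (f : ℕ → ℕ → ℝ) (k : ℕ) :
    ∑ n ∈ range (k + 1), f n (k - n) * p1 x y n k =
      productFormSum x y f k / productFormSum x y (fun _ _ => 1) k := by
  simp only [productFormSum, Nat.sum_antidiagonal_eq_sum_range_succ
    (fun n m => f n m * (x ^ m * y ^ n)), Nat.sum_antidiagonal_eq_sum_range_succ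
    (fun n m => x ^ m * y ^ n), one_mul, sum_div]
  refine sum_congr rfl fun n hn => ?_
  rw [p1, if_pos (Nat.lt_succ_iff.mp (mem_range.mp hn))]
  ring

theorem productFormSum_one_pos {x y : ℝ} (hx : 0 < x) (hy : 0 < y) (k : ℕ) :
    0 < productFormSum x y (fun _ _ => 1) k :=
  sum_pos (fun _ _ => by positivity) ⟨(k, 0), by simp⟩

theorem productFormSum_div_le_succ {x y : ℝ} (hx : 0 < x) (hy : 0 < y) {g : ℕ → ℝ}
    (hg : Monotone g) (k : ℕ) :
    productFormSum x y (fun _ m => g m) k / productFormSum x y (fun _ _ => 1) k ≤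
      productFormSum x y (fun _ m => g m) (k + 1) / productFormSum x y (fun _ _ => 1) (k + 1) := by
  have hZ := productFormSum_one_pos hx hy k
  have hbound : productFormSum x y (fun _ m => g m) k ≤
      g (k + 1) * productFormSum x y (fun _ _ => 1) k := by
    simp only [productFormSum, mul_sum, one_mul]
    refine sum_le_sum fun p hp => mul_le_mul_of_nonneg_right (hg ?_) (by positivity)
    have := HasAntidiagonal.antidiagonal.snd_le hp
    omega
  rw [productFormSum_succ, productFormSum_succ, one_mul,
    div_le_div_iff₀ hZ (by positivity)]
  nlinarith [mul_le_mul_of_nonneg_left hbound (pow_pos hx (k + 1)).le]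

theorem stmt_18_general (μ₁ μ₂ : ℝ) (hμ₁ : 0 < μ₁) (hμ₂ : 0 < μ₂)
    (T : ℕ × ℕ → ℝ)
    (hT0 : ∀ m : ℕ, T (0, m) = m / μ₂)
    (hTb : ∀ n : ℕ, T (n + 1, 0) = 1 / μ₁ + T (n, 1))
    (hTrec : ∀ n m : ℕ, T (n + 1, m + 1) =
      1 / (μ₁ + μ₂) + μ₁ / (μ₁ + μ₂) * T (n, m + 2) + μ₂ / (μ₁ + μ₂) * T (n + 1, m))
    (T₂ : ℕ → ℕ → ℝ)
    (hT₂ : ∀ n m : ℕ, T₂ n m = T (n, m) - n / μ₁) :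
    ∀ k : ℕ,
      ∑ n ∈ Finset.range (k + 2), T₂ (n + 1) (k + 1 - n) * p1 μ₁ μ₂ n (k + 1) ≥
        ∑ n ∈ Finset.range (k + 1), T₂ (n + 1) (k - n) * p1 μ₁ μ₂ n k := by
  intro k
  have hb : ∀ n, T₂ (n + 1) 0 = T₂ n 1 := fun n => by
    simp only [hT₂, hTb]
    push_cast
    ring
  have hi : ∀ n m, (μ₁ + μ₂) * T₂ (n + 1) (m + 1) = μ₁ * T₂ n (m + 2) + μ₂ * T₂ (n + 1) m :=
    fun n m => by
      simp only [hT₂, hTrec]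
      field_simp
      push_cast
      ring
  have hmono : Monotone fun m => T₂ 0 (m + 1) := fun a b hab => by
    simp only [hT₂, hT0]
    gcongr
  rw [ge_iff_le, sum_mul_p1, sum_mul_p1 _ _ _ (k + 1), productFormSum_eq_of_rec hb hi,
    productFormSum_eq_of_rec hb hi]
  exact productFormSum_div_le_succ hμ₁ hμ₂ hmono k

/-- If `μ₁ ≥ μ₂`, the expected sojourn time at the second node,
`T₂(k) = Σ_{n=0}^{k} T₂(n+1, k−n)·p₁(n|k)`, is non-decreasing in `k`. -/
theorem stmt_18 (μ₁ μ₂ : ℝ) (hμ₁ : 0 < μ₁) (hμ₂ : 0 < μ₂) (hμ : μ₁ ≥ μ₂)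
    (T : ℕ × ℕ → ℝ)
    (hT0 : ∀ m : ℕ, T (0, m) = m / μ₂)
    (hTb : ∀ n : ℕ, T (n + 1, 0) = 1 / μ₁ + T (n, 1))
    (hTrec : ∀ n m : ℕ, T (n + 1, m + 1) =
      1 / (μ₁ + μ₂) + μ₁ / (μ₁ + μ₂) * T (n, m + 2) + μ₂ / (μ₁ + μ₂) * T (n + 1, m))
    (T₂ : ℕ → ℕ → ℝ)
    (hT₂ : ∀ n m : ℕ, T₂ n m = T (n, m) - n / μ₁) :
    ∀ k : ℕ,
      ∑ n ∈ Finset.range (k + 2), T₂ (n + 1) (k + 1 - n) * p1 μ₁ μ₂ n (k + 1) ≥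
        ∑ n ∈ Finset.range (k + 1), T₂ (n + 1) (k - n) * p1 μ₁ μ₂ n k :=
  stmt_18_general μ₁ μ₂ hμ₁ hμ₂ T hT0 hTb hTrec T₂ hT₂
end

section
/- If μ₁ > μ₂, or if C₁ ≥ C₂, then the expected net profit P(k) = R − C₁·T₁(k) − C₂·T₂(k) is non-increasing in k, i.e. P(k+1) ≤ P(k) for all k ≥ 0. Moreover, under these hypotheses together with R > C₁/μ₁ + C₂/μ₂, one has P(0) > 0 and there exists a threshold K ∈ ℕ ∪ {∞} with K ≥ 1 such that P(k) ≥ 0 for every k < K and P(k) < 0 for every k ≥ K. -/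
noncomputable def Sden (μ₁ μ₂ : ℝ) (k : ℕ) : ℝ :=
  ∑ h ∈ Finset.range (k + 1), μ₁ ^ (k - h) * μ₂ ^ h

noncomputable def Vsum (μ₁ μ₂ : ℝ) (c : ℕ → ℕ → ℝ) (k : ℕ) : ℝ :=
  ∑ n ∈ Finset.range (k + 1), μ₁ ^ (k - n) * μ₂ ^ n * c n (k - n)

lemma Sden_pos {μ₁ μ₂ : ℝ} (hμ₁ : 0 < μ₁) (hμ₂ : 0 < μ₂) (k : ℕ) :
    0 < Sden μ₁ μ₂ k := by
  apply Finset.sum_pos (fun i _ => by positivity)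
  exact ⟨0, Finset.mem_range.mpr (Nat.succ_pos k)⟩

lemma Sden_alpha (μ₁ μ₂ : ℝ) (k : ℕ) :
    Sden μ₁ μ₂ (k + 1) = μ₁ * Sden μ₁ μ₂ k + μ₂ ^ (k + 1) := by
  have h : ∀ h ∈ Finset.range (k + 1),
      μ₁ ^ (k + 1 - h) * μ₂ ^ h = μ₁ * (μ₁ ^ (k - h) * μ₂ ^ h) := by
    intro h hh
    have hh' : h ≤ k := Nat.lt_succ_iff.mp (Finset.mem_range.mp hh)
    rw [show k + 1 - h = (k - h) + 1 by omega, pow_succ]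
    ring
  simp only [Sden]
  rw [Finset.sum_range_succ, Finset.sum_congr rfl h, ← Finset.mul_sum]
  simp [Nat.sub_self]

lemma Sden_beta (μ₁ μ₂ : ℝ) (k : ℕ) :
    Sden μ₁ μ₂ (k + 1) = μ₂ * Sden μ₁ μ₂ k + μ₁ ^ (k + 1) := by
  have h : ∀ h ∈ Finset.range (k + 1),
      μ₁ ^ (k + 1 - (h + 1)) * μ₂ ^ (h + 1) = μ₂ * (μ₁ ^ (k - h) * μ₂ ^ h) := by
    intro h hh
    have hh' : h ≤ k := Nat.lt_succ_iff.mp (Finset.mem_range.mp hh)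
    rw [show k + 1 - (h + 1) = k - h by omega, pow_succ]
    ring
  simp only [Sden]
  rw [Finset.sum_range_succ']
  simp only [pow_zero, mul_one, Nat.sub_zero]
  rw [Finset.sum_congr rfl h, ← Finset.mul_sum]

lemma Vsum_alpha (μ₁ μ₂ : ℝ) (c : ℕ → ℕ → ℝ) (k : ℕ) :
    Vsum μ₁ μ₂ c (k + 1) =
      μ₁ * (∑ n ∈ Finset.range (k + 1), μ₁ ^ (k - n) * μ₂ ^ n * c n (k - n + 1))
        + μ₂ ^ (k + 1) * c (k + 1) 0 := by
  have h : ∀ n ∈ Finset.range (k + 1),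
      μ₁ ^ (k + 1 - n) * μ₂ ^ n * c n (k + 1 - n)
        = μ₁ * (μ₁ ^ (k - n) * μ₂ ^ n * c n (k - n + 1)) := by
    intro n hn
    have hn' : n ≤ k := Nat.lt_succ_iff.mp (Finset.mem_range.mp hn)
    rw [show k + 1 - n = (k - n) + 1 by omega, pow_succ]
    ring
  simp only [Vsum]
  rw [Finset.sum_range_succ, Finset.sum_congr rfl h, ← Finset.mul_sum]
  simp [Nat.sub_self]

lemma Vsum_beta (μ₁ μ₂ : ℝ) (c : ℕ → ℕ → ℝ) (k : ℕ) :
    Vsum μ₁ μ₂ c (k + 1) =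
      μ₂ * (∑ n ∈ Finset.range (k + 1), μ₁ ^ (k - n) * μ₂ ^ n * c (n + 1) (k - n))
        + μ₁ ^ (k + 1) * c 0 (k + 1) := by
  have h : ∀ n ∈ Finset.range (k + 1),
      μ₁ ^ (k + 1 - (n + 1)) * μ₂ ^ (n + 1) * c (n + 1) (k + 1 - (n + 1))
        = μ₂ * (μ₁ ^ (k - n) * μ₂ ^ n * c (n + 1) (k - n)) := by
    intro n hn
    have hn' : n ≤ k := Nat.lt_succ_iff.mp (Finset.mem_range.mp hn)
    rw [show k + 1 - (n + 1) = k - n by omega, pow_succ]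
    ring
  simp only [Vsum]
  rw [Finset.sum_range_succ']
  simp only [pow_zero, mul_one, Nat.sub_zero]
  rw [Finset.sum_congr rfl h, ← Finset.mul_sum]

lemma alphaStep {μ₁ μ₂ : ℝ} (hμ₁ : 0 < μ₁) (hμ₂ : 0 < μ₂) (c : ℕ → ℕ → ℝ) (k : ℕ)
    (h1 : ∀ n, n ≤ k → c n (k - n) ≤ c n (k - n + 1))
    (h2 : ∀ n, n ≤ k → c n (k - n) ≤ c (k + 1) 0) :
    Sden μ₁ μ₂ (k + 1) * Vsum μ₁ μ₂ c k ≤ Sden μ₁ μ₂ k * Vsum μ₁ μ₂ c (k + 1) := by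
  rw [Sden_alpha, Vsum_alpha]
  have hSpos := Sden_pos hμ₁ hμ₂ k
  have e1 : Vsum μ₁ μ₂ c k ≤ ∑ n ∈ Finset.range (k + 1), μ₁ ^ (k - n) * μ₂ ^ n * c n (k - n + 1) := by
    apply Finset.sum_le_sum
    intro n hn
    have hn' : n ≤ k := Nat.lt_succ_iff.mp (Finset.mem_range.mp hn)
    exact mul_le_mul_of_nonneg_left (h1 n hn') (by positivity)
  have e2 : Vsum μ₁ μ₂ c k ≤ Sden μ₁ μ₂ k * c (k + 1) 0 := by
    rw [Sden, Finset.sum_mul]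
    apply Finset.sum_le_sum
    intro n hn
    have hn' : n ≤ k := Nat.lt_succ_iff.mp (Finset.mem_range.mp hn)
    exact mul_le_mul_of_nonneg_left (h2 n hn') (by positivity)
  have f1 := mul_le_mul_of_nonneg_left e1 (by positivity : (0:ℝ) ≤ μ₁ * Sden μ₁ μ₂ k)
  have f2 := mul_le_mul_of_nonneg_left e2 (by positivity : (0:ℝ) ≤ μ₂ ^ (k + 1))
  nlinarith [f1, f2]

lemma betaStep {μ₁ μ₂ : ℝ} (hμ₁ : 0 < μ₁) (hμ₂ : 0 < μ₂) (c : ℕ → ℕ → ℝ) (k : ℕ)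
    (h1 : ∀ n, n ≤ k → c n (k - n) ≤ c (n + 1) (k - n))
    (h2 : ∀ n, n ≤ k → c n (k - n) ≤ c 0 (k + 1)) :
    Sden μ₁ μ₂ (k + 1) * Vsum μ₁ μ₂ c k ≤ Sden μ₁ μ₂ k * Vsum μ₁ μ₂ c (k + 1) := by
  rw [Sden_beta, Vsum_beta]
  have hSpos := Sden_pos hμ₁ hμ₂ k
  have e1 : Vsum μ₁ μ₂ c k ≤ ∑ n ∈ Finset.range (k + 1), μ₁ ^ (k - n) * μ₂ ^ n * c (n + 1) (k - n) := by
    apply Finset.sum_le_sum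
    intro n hn
    have hn' : n ≤ k := Nat.lt_succ_iff.mp (Finset.mem_range.mp hn)
    exact mul_le_mul_of_nonneg_left (h1 n hn') (by positivity)
  have e2 : Vsum μ₁ μ₂ c k ≤ Sden μ₁ μ₂ k * c 0 (k + 1) := by
    rw [Sden, Finset.sum_mul]
    apply Finset.sum_le_sum
    intro n hn
    have hn' : n ≤ k := Nat.lt_succ_iff.mp (Finset.mem_range.mp hn)
    exact mul_le_mul_of_nonneg_left (h2 n hn') (by positivity)
  have f1 := mul_le_mul_of_nonneg_left e1 (by positivity : (0:ℝ) ≤ μ₂ * Sden μ₁ μ₂ k)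
  have f2 := mul_le_mul_of_nonneg_left e2 (by positivity : (0:ℝ) ≤ μ₁ ^ (k + 1))
  nlinarith [f1, f2]

section Tlemmas
variable {μ₁ μ₂ : ℝ} (hμ₁ : 0 < μ₁) (hμ₂ : 0 < μ₂)
variable (T : ℕ × ℕ → ℝ)
variable (hT0 : ∀ m : ℕ, T (0, m) = m / μ₂)
variable (hTb : ∀ n : ℕ, T (n + 1, 0) = 1 / μ₁ + T (n, 1))
variable (hTrec : ∀ n m : ℕ, T (n + 1, m + 1) =
      1 / (μ₁ + μ₂) + μ₁ / (μ₁ + μ₂) * T (n, m + 2) + μ₂ / (μ₁ + μ₂) * T (n + 1, m))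

include hμ₁ hμ₂ hT0 hTb hTrec

lemma monoM : ∀ n m : ℕ, T (n, m) ≤ T (n, m + 1) := by
  have hs : (0:ℝ) < μ₁ + μ₂ := by linarith
  have ha : (0:ℝ) ≤ μ₁ / (μ₁ + μ₂) := by positivity
  have hb : (0:ℝ) ≤ μ₂ / (μ₁ + μ₂) := by positivity
  intro n
  induction n with
  | zero =>
    intro m
    rw [hT0, hT0]
    have : (m:ℝ) ≤ (m:ℝ) + 1 := by linarith
    push_cast
    gcongr
  | succ n ih =>
    intro m
    induction m with
    | zero =>
      have key : T (n + 1, 1) - T (n + 1, 0)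
          = μ₁ / (μ₁ + μ₂) * (T (n, 2) - T (n, 1)) := by
        rw [hTrec n 0, hTb n]
        field_simp
        ring
      have h1 := ih 1
      nlinarith [mul_nonneg ha (sub_nonneg.mpr h1)]
    | succ m ihm =>
      have e1 : T (n + 1, m + 1) = 1 / (μ₁ + μ₂) + μ₁ / (μ₁ + μ₂) * T (n, m + 2)
          + μ₂ / (μ₁ + μ₂) * T (n + 1, m) := hTrec n m
      have e2 : T (n + 1, m + 2) = 1 / (μ₁ + μ₂) + μ₁ / (μ₁ + μ₂) * T (n, m + 3)
          + μ₂ / (μ₁ + μ₂) * T (n + 1, m + 1) := hTrec n (m + 1)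
      have f1 : μ₁ / (μ₁ + μ₂) * T (n, m + 2) ≤ μ₁ / (μ₁ + μ₂) * T (n, m + 3) :=
        mul_le_mul_of_nonneg_left (ih (m + 2)) ha
      have f2 : μ₂ / (μ₁ + μ₂) * T (n + 1, m) ≤ μ₂ / (μ₁ + μ₂) * T (n + 1, m + 1) :=
        mul_le_mul_of_nonneg_left ihm hb
      linarith

lemma diagLow : ∀ n m : ℕ, T (n, m + 1) ≤ T (n + 1, m) := by
  have hs : (0:ℝ) < μ₁ + μ₂ := by linarith
  have ha : (0:ℝ) ≤ μ₁ / (μ₁ + μ₂) := by positivity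
  have hb : (0:ℝ) ≤ μ₂ / (μ₁ + μ₂) := by positivity
  intro n
  induction n with
  | zero =>
    intro m
    induction m with
    | zero =>
      rw [hTb 0]
      have := one_div_pos.mpr hμ₁
      linarith
    | succ m ihm =>
      show T (0, m + 1 + 1) ≤ T (1, m + 1)
      have ihm' : T (0, m + 1) ≤ T (1, m) := ihm
      have e : T (1, m + 1) = 1 / (μ₁ + μ₂) + μ₁ / (μ₁ + μ₂) * T (0, m + 2)
          + μ₂ / (μ₁ + μ₂) * T (1, m) := hTrec 0 m
      have v2 : T (0, m + 2) = ((m:ℝ) + 2) / μ₂ := by rw [hT0]; push_cast; ring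
      have v1 : T (0, m + 1) = ((m:ℝ) + 1) / μ₂ := by rw [hT0]; push_cast; ring
      rw [v1] at ihm'
      have f2 : μ₂ / (μ₁ + μ₂) * (((m:ℝ) + 1) / μ₂) ≤ μ₂ / (μ₁ + μ₂) * T (1, m) :=
        mul_le_mul_of_nonneg_left ihm' hb
      have idt : 1 / (μ₁ + μ₂) + μ₁ / (μ₁ + μ₂) * (((m:ℝ) + 2) / μ₂)
          + μ₂ / (μ₁ + μ₂) * (((m:ℝ) + 1) / μ₂) = ((m:ℝ) + 2) / μ₂ := by
        field_simp
        ring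
      have v3 : T (0, m + 1 + 1) = ((m:ℝ) + 2) / μ₂ := by rw [hT0]; push_cast; ring
      rw [v2] at e
      rw [v3]
      linarith [e, f2, idt]
  | succ n ih =>
    intro m
    induction m with
    | zero =>
      rw [hTb (n + 1)]
      have := one_div_pos.mpr hμ₁
      linarith
    | succ m ihm =>
      have e1 : T (n + 1, m + 2) = 1 / (μ₁ + μ₂) + μ₁ / (μ₁ + μ₂) * T (n, m + 3)
          + μ₂ / (μ₁ + μ₂) * T (n + 1, m + 1) := hTrec n (m + 1)
      have e2 : T (n + 2, m + 1) = 1 / (μ₁ + μ₂) + μ₁ / (μ₁ + μ₂) * T (n + 1, m + 2)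
          + μ₂ / (μ₁ + μ₂) * T (n + 2, m) := hTrec (n + 1) m
      have f1 : μ₁ / (μ₁ + μ₂) * T (n, m + 3) ≤ μ₁ / (μ₁ + μ₂) * T (n + 1, m + 2) :=
        mul_le_mul_of_nonneg_left (ih (m + 2)) ha
      have f2 : μ₂ / (μ₁ + μ₂) * T (n + 1, m + 1) ≤ μ₂ / (μ₁ + μ₂) * T (n + 2, m) :=
        mul_le_mul_of_nonneg_left ihm hb
      linarith

lemma diagUp : ∀ n m : ℕ, T (n + 1, m) ≤ T (n, m + 1) + 1 / μ₁ := by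
  have hs : (0:ℝ) < μ₁ + μ₂ := by linarith
  have ha : (0:ℝ) ≤ μ₁ / (μ₁ + μ₂) := by positivity
  have hb : (0:ℝ) ≤ μ₂ / (μ₁ + μ₂) := by positivity
  have hab : μ₁ / (μ₁ + μ₂) + μ₂ / (μ₁ + μ₂) = 1 := by field_simp
  intro n
  induction n with
  | zero =>
    intro m
    induction m with
    | zero =>
      rw [hTb 0]
      linarith
    | succ m ihm =>
      show T (1, m + 1) ≤ T (0, m + 1 + 1) + 1 / μ₁
      have ihm' : T (1, m) ≤ T (0, m + 1) + 1 / μ₁ := ihm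
      have e : T (1, m + 1) = 1 / (μ₁ + μ₂) + μ₁ / (μ₁ + μ₂) * T (0, m + 2)
          + μ₂ / (μ₁ + μ₂) * T (1, m) := hTrec 0 m
      have v2 : T (0, m + 2) = ((m:ℝ) + 2) / μ₂ := by rw [hT0]; push_cast; ring
      have v1 : T (0, m + 1) = ((m:ℝ) + 1) / μ₂ := by rw [hT0]; push_cast; ring
      rw [v1] at ihm'
      have f2 : μ₂ / (μ₁ + μ₂) * T (1, m)
          ≤ μ₂ / (μ₁ + μ₂) * (((m:ℝ) + 1) / μ₂) + μ₂ / (μ₁ + μ₂) * (1 / μ₁) := by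
        have := mul_le_mul_of_nonneg_left ihm' hb
        nlinarith [this]
      have idt : 1 / (μ₁ + μ₂) + μ₁ / (μ₁ + μ₂) * (((m:ℝ) + 2) / μ₂)
          + μ₂ / (μ₁ + μ₂) * (((m:ℝ) + 1) / μ₂) = ((m:ℝ) + 2) / μ₂ := by
        field_simp
        ring
      have fb : μ₂ / (μ₁ + μ₂) * (1 / μ₁) ≤ 1 / μ₁ := by
        have hb1 : μ₂ / (μ₁ + μ₂) ≤ 1 := by
          rw [div_le_one hs]; linarith
        nlinarith [one_div_pos.mpr hμ₁]
      have v3 : T (0, m + 1 + 1) = ((m:ℝ) + 2) / μ₂ := by rw [hT0]; push_cast; ring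
      rw [v2] at e
      rw [v3]
      linarith [e, f2, idt, fb]
  | succ n ih =>
    intro m
    induction m with
    | zero =>
      rw [hTb (n + 1)]
      linarith
    | succ m ihm =>
      have e1 : T (n + 2, m + 1) = 1 / (μ₁ + μ₂) + μ₁ / (μ₁ + μ₂) * T (n + 1, m + 2)
          + μ₂ / (μ₁ + μ₂) * T (n + 2, m) := hTrec (n + 1) m
      have e2 : T (n + 1, m + 2) = 1 / (μ₁ + μ₂) + μ₁ / (μ₁ + μ₂) * T (n, m + 3)
          + μ₂ / (μ₁ + μ₂) * T (n + 1, m + 1) := hTrec n (m + 1)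
      have f1 : μ₁ / (μ₁ + μ₂) * T (n + 1, m + 2)
          ≤ μ₁ / (μ₁ + μ₂) * T (n, m + 3) + μ₁ / (μ₁ + μ₂) * (1 / μ₁) := by
        have := mul_le_mul_of_nonneg_left (ih (m + 2)) ha
        nlinarith [this]
      have f2 : μ₂ / (μ₁ + μ₂) * T (n + 2, m)
          ≤ μ₂ / (μ₁ + μ₂) * T (n + 1, m + 1) + μ₂ / (μ₁ + μ₂) * (1 / μ₁) := by
        have := mul_le_mul_of_nonneg_left ihm hb
        nlinarith [this]
      have idt : μ₁ / (μ₁ + μ₂) * (1 / μ₁) + μ₂ / (μ₁ + μ₂) * (1 / μ₁) = 1 / μ₁ := by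
        field_simp
      linarith

lemma monoN (hμle : μ₂ ≤ μ₁) : ∀ n m : ℕ, T (n, m) + 1 / μ₁ ≤ T (n + 1, m) := by
  have hs : (0:ℝ) < μ₁ + μ₂ := by linarith
  have ha : (0:ℝ) ≤ μ₁ / (μ₁ + μ₂) := by positivity
  have hb : (0:ℝ) ≤ μ₂ / (μ₁ + μ₂) := by positivity
  intro n
  induction n with
  | zero =>
    intro m
    have h1 : T (0, m + 1) ≤ T (1, m) := diagLow hμ₁ hμ₂ T hT0 hTb hTrec 0 m
    have v1 : T (0, m + 1) = ((m:ℝ) + 1) / μ₂ := by rw [hT0]; push_cast; ring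
    have v0 : T (0, m) = (m:ℝ) / μ₂ := hT0 m
    have hinv : 1 / μ₁ ≤ 1 / μ₂ := one_div_le_one_div_of_le hμ₂ hμle
    have : ((m:ℝ) + 1) / μ₂ = (m:ℝ) / μ₂ + 1 / μ₂ := by ring
    linarith
  | succ n ih =>
    intro m
    induction m with
    | zero =>
      rw [hTb n, hTb (n + 1)]
      linarith [ih 1]
    | succ m ihm =>
      have e1 : T (n + 1, m + 1) = 1 / (μ₁ + μ₂) + μ₁ / (μ₁ + μ₂) * T (n, m + 2)
          + μ₂ / (μ₁ + μ₂) * T (n + 1, m) := hTrec n m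
      have e2 : T (n + 2, m + 1) = 1 / (μ₁ + μ₂) + μ₁ / (μ₁ + μ₂) * T (n + 1, m + 2)
          + μ₂ / (μ₁ + μ₂) * T (n + 2, m) := hTrec (n + 1) m
      have f1 : μ₁ / (μ₁ + μ₂) * T (n, m + 2) + μ₁ / (μ₁ + μ₂) * (1 / μ₁)
          ≤ μ₁ / (μ₁ + μ₂) * T (n + 1, m + 2) := by
        have := mul_le_mul_of_nonneg_left (ih (m + 2)) ha
        nlinarith [this]
      have f2 : μ₂ / (μ₁ + μ₂) * T (n + 1, m) + μ₂ / (μ₁ + μ₂) * (1 / μ₁)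
          ≤ μ₂ / (μ₁ + μ₂) * T (n + 2, m) := by
        have := mul_le_mul_of_nonneg_left ihm hb
        nlinarith [this]
      have idt : μ₁ / (μ₁ + μ₂) * (1 / μ₁) + μ₂ / (μ₁ + μ₂) * (1 / μ₁) = 1 / μ₁ := by
        field_simp
      linarith

lemma diagIter : ∀ j n m : ℕ, T (n, m + j) ≤ T (n + j, m) := by
  intro j
  induction j with
  | zero => intro n m; exact le_of_eq rfl
  | succ j ih =>
    intro n m
    have h0 : T (n, m + (j + 1)) = T (n, (m + 1) + j) := by
      rw [show m + (j + 1) = (m + 1) + j by omega]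
    have h1 : T (n, (m + 1) + j) ≤ T (n + j, m + 1) := ih n (m + 1)
    have h2 : T (n + j, m + 1) ≤ T (n + j + 1, m) := diagLow hμ₁ hμ₂ T hT0 hTb hTrec (n + j) m
    rw [h0]
    exact le_trans h1 h2

lemma diagIterUp : ∀ j n m : ℕ, T (n + j, m) ≤ T (n, m + j) + (j : ℝ) / μ₁ := by
  intro j
  induction j with
  | zero => intro n m; simp
  | succ j ih =>
    intro n m
    have h1 : T (n + j + 1, m) ≤ T (n + j, m + 1) + 1 / μ₁ :=
      diagUp hμ₁ hμ₂ T hT0 hTb hTrec (n + j) m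
    have h2 : T (n + j, m + 1) ≤ T (n, (m + 1) + j) + (j : ℝ) / μ₁ := ih n (m + 1)
    have h3 : T (n, (m + 1) + j) = T (n, m + (j + 1)) := by
      rw [show (m + 1) + j = m + (j + 1) by omega]
    have h4 : (((j + 1 : ℕ)) : ℝ) / μ₁ = (j : ℝ) / μ₁ + 1 / μ₁ := by push_cast; ring
    rw [h3] at h2
    show T (n + j + 1, m) ≤ T (n, m + (j + 1)) + ((j + 1 : ℕ) : ℝ) / μ₁
    linarith

lemma monoTotal : ∀ n k : ℕ, n ≤ k → T (n + 1, k - n) ≤ T (k + 2, 0) := by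
  intro n k hnk
  have h1 : T (n + 1, k - n) ≤ T (n + 1, (k - n) + 1) := monoM hμ₁ hμ₂ T hT0 hTb hTrec (n + 1) (k - n)
  have h2 : T (n + 1, 0 + ((k - n) + 1)) ≤ T ((n + 1) + ((k - n) + 1), 0) :=
    diagIter hμ₁ hμ₂ T hT0 hTb hTrec ((k - n) + 1) (n + 1) 0
  rw [Nat.zero_add, show (n + 1) + ((k - n) + 1) = k + 2 by omega] at h2
  exact le_trans h1 h2

lemma T2chain : ∀ n k : ℕ, n ≤ k →
    T (n + 1, k - n) - ((n : ℝ) + 1) / μ₁ ≤ T (1, k + 1) - 1 / μ₁ := by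
  intro n k hnk
  have h1 : T (1 + n, k - n) ≤ T (1, (k - n) + n) + (n : ℝ) / μ₁ :=
    diagIterUp hμ₁ hμ₂ T hT0 hTb hTrec n 1 (k - n)
  rw [show 1 + n = n + 1 by omega, show (k - n) + n = k by omega] at h1
  have h2 : T (1, k) ≤ T (1, k + 1) := monoM hμ₁ hμ₂ T hT0 hTb hTrec 1 k
  have h3 : ((n : ℝ) + 1) / μ₁ = (n : ℝ) / μ₁ + 1 / μ₁ := by ring
  linarith

end Tlemmas
noncomputable def cFf (μ₁ C₁ C₂ : ℝ) (T : ℕ × ℕ → ℝ) (n m : ℕ) : ℝ :=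
  C₁ * (((n : ℝ) + 1) / μ₁) + C₂ * (T (n + 1, m) - ((n : ℝ) + 1) / μ₁)

noncomputable def cTf (T : ℕ × ℕ → ℝ) (n m : ℕ) : ℝ := T (n + 1, m)

noncomputable def c2f (μ₁ : ℝ) (T : ℕ × ℕ → ℝ) (n m : ℕ) : ℝ :=
  T (n + 1, m) - ((n : ℝ) + 1) / μ₁

/-- If `μ₁ > μ₂` or `C₁ ≥ C₂`, then the expected net profit
`P(k) = R − C₁·T₁(k) − C₂·T₂(k)` is non-increasing in `k`; moreover, under these hypotheses
together with `R > C₁/μ₁ + C₂/μ₂`, one has `P(0) > 0` and there exists a threshold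
`K ∈ ℕ ∪ {∞}` with `K ≥ 1` such that `P(k) ≥ 0` for every `k < K` and `P(k) < 0` for every
`k ≥ K`. -/
theorem stmt_19 (μ₁ μ₂ R C₁ C₂ : ℝ) (hμ₁ : 0 < μ₁) (hμ₂ : 0 < μ₂)
    (hC₁ : 0 < C₁) (hC₂ : 0 < C₂)
    (T : ℕ × ℕ → ℝ)
    (hT0 : ∀ m : ℕ, T (0, m) = m / μ₂)
    (hTb : ∀ n : ℕ, T (n + 1, 0) = 1 / μ₁ + T (n, 1))
    (hTrec : ∀ n m : ℕ, T (n + 1, m + 1) =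
      1 / (μ₁ + μ₂) + μ₁ / (μ₁ + μ₂) * T (n, m + 2) + μ₂ / (μ₁ + μ₂) * T (n + 1, m))
    (T₂ : ℕ → ℕ → ℝ)
    (hT₂ : ∀ n m : ℕ, T₂ n m = T (n, m) - n / μ₁)
    (T₁k T₂k P : ℕ → ℝ)
    (hT₁k : ∀ k : ℕ,
      T₁k k = ∑ n ∈ Finset.range (k + 1), ((n : ℝ) + 1) / μ₁ * p1 μ₁ μ₂ n k)
    (hT₂k : ∀ k : ℕ,
      T₂k k = ∑ n ∈ Finset.range (k + 1), T₂ (n + 1) (k - n) * p1 μ₁ μ₂ n k)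
    (hP : ∀ k : ℕ, P k = R - C₁ * T₁k k - C₂ * T₂k k)
    (hcase : μ₂ < μ₁ ∨ C₂ ≤ C₁)
    (hR : R > C₁ / μ₁ + C₂ / μ₂) :
    (∀ k : ℕ, P (k + 1) ≤ P k) ∧
    0 < P 0 ∧
    ∃ K : ℕ∞, 1 ≤ K ∧
      (∀ k : ℕ, (k : ℕ∞) < K → 0 ≤ P k) ∧
      (∀ k : ℕ, K ≤ (k : ℕ∞) → P k < 0) := by
  classical
  have hSpos : ∀ k, 0 < Sden μ₁ μ₂ k := Sden_pos hμ₁ hμ₂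
  -- rewrite the expected cost through `Vsum`
  have hWk : ∀ k, C₁ * T₁k k + C₂ * T₂k k
      = Vsum μ₁ μ₂ (cFf μ₁ C₁ C₂ T) k / Sden μ₁ μ₂ k := by
    intro k
    rw [hT₁k k, hT₂k k, Finset.mul_sum, Finset.mul_sum, ← Finset.sum_add_distrib]
    simp only [Vsum]
    rw [Finset.sum_div]
    refine Finset.sum_congr rfl ?_
    intro n hn
    have hn' : n ≤ k := Nat.lt_succ_iff.mp (Finset.mem_range.mp hn)
    rw [hT₂ (n + 1) (k - n)]
    simp only [p1, cFf, if_pos hn', Sden]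
    push_cast
    ring
  -- the key one-step inequality
  have key : ∀ k, Sden μ₁ μ₂ (k + 1) * Vsum μ₁ μ₂ (cFf μ₁ C₁ C₂ T) k
      ≤ Sden μ₁ μ₂ k * Vsum μ₁ μ₂ (cFf μ₁ C₁ C₂ T) (k + 1) := by
    intro k
    rcases le_or_gt C₂ C₁ with hCle | hClt
    · -- case C₂ ≤ C₁ : use the α-decomposition directly
      apply alphaStep hμ₁ hμ₂
      · intro n hn
        simp only [cFf]
        have h : T (n + 1, k - n) ≤ T (n + 1, k - n + 1) :=
          monoM hμ₁ hμ₂ T hT0 hTb hTrec (n + 1) (k - n)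
        nlinarith [mul_le_mul_of_nonneg_left h hC₂.le]
      · intro n hn
        simp only [cFf]
        have h1 : T (n + 1, k - n) ≤ T (k + 1 + 1, 0) :=
          monoTotal hμ₁ hμ₂ T hT0 hTb hTrec n k hn
        have hnk : (n : ℝ) ≤ (k : ℝ) := Nat.cast_le.mpr hn
        have h2 : ((n : ℝ) + 1) / μ₁ ≤ (((k : ℕ) : ℝ) + 1 + 1) / μ₁ := by
          gcongr
          linarith
        have f1 := mul_le_mul_of_nonneg_left h1 hC₂.le
        have f2 := mul_le_mul_of_nonneg_left h2 (by linarith : (0:ℝ) ≤ C₁ - C₂)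
        push_cast
        nlinarith [f1, f2]
    · -- case C₁ < C₂ : then μ₂ < μ₁
      have hμ : μ₂ < μ₁ := hcase.resolve_right (not_le.mpr hClt)
      have Vsplit : ∀ j, Vsum μ₁ μ₂ (cFf μ₁ C₁ C₂ T) j
          = C₁ * Vsum μ₁ μ₂ (cTf T) j + (C₂ - C₁) * Vsum μ₁ μ₂ (c2f μ₁ T) j := by
        intro j
        simp only [Vsum, Finset.mul_sum, ← Finset.sum_add_distrib]
        refine Finset.sum_congr rfl ?_
        intro n hn
        simp only [cFf, cTf, c2f]
        ring
      have A1 : Sden μ₁ μ₂ (k + 1) * Vsum μ₁ μ₂ (cTf T) k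
          ≤ Sden μ₁ μ₂ k * Vsum μ₁ μ₂ (cTf T) (k + 1) := by
        apply alphaStep hμ₁ hμ₂
        · intro n hn
          exact monoM hμ₁ hμ₂ T hT0 hTb hTrec (n + 1) (k - n)
        · intro n hn
          exact monoTotal hμ₁ hμ₂ T hT0 hTb hTrec n k hn
      have A2 : Sden μ₁ μ₂ (k + 1) * Vsum μ₁ μ₂ (c2f μ₁ T) k
          ≤ Sden μ₁ μ₂ k * Vsum μ₁ μ₂ (c2f μ₁ T) (k + 1) := by
        apply betaStep hμ₁ hμ₂
        · intro n hn
          simp only [c2f]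
          have h : T (n + 1, k - n) + 1 / μ₁ ≤ T (n + 1 + 1, k - n) :=
            monoN hμ₁ hμ₂ T hT0 hTb hTrec hμ.le (n + 1) (k - n)
          push_cast
          have e : ((n : ℝ) + 1 + 1) / μ₁ = ((n : ℝ) + 1) / μ₁ + 1 / μ₁ := by ring
          linarith
        · intro n hn
          simp only [c2f]
          have h : T (n + 1, k - n) - ((n : ℝ) + 1) / μ₁ ≤ T (0 + 1, k + 1) - 1 / μ₁ :=
            T2chain hμ₁ hμ₂ T hT0 hTb hTrec n k hn
          push_cast
          have e : ((0 : ℝ) + 1) / μ₁ = 1 / μ₁ := by ring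
          linarith
      rw [Vsplit k, Vsplit (k + 1)]
      have g1 := mul_le_mul_of_nonneg_left A1 hC₁.le
      have g2 := mul_le_mul_of_nonneg_left A2 (by linarith : (0:ℝ) ≤ C₂ - C₁)
      nlinarith [g1, g2]
  -- monotonicity of `P`
  have step : ∀ k : ℕ, P (k + 1) ≤ P k := by
    intro k
    rw [hP k, hP (k + 1)]
    have h : C₁ * T₁k k + C₂ * T₂k k ≤ C₁ * T₁k (k + 1) + C₂ * T₂k (k + 1) := by
      rw [hWk k, hWk (k + 1), div_le_div_iff₀ (hSpos k) (hSpos (k + 1))]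
      nlinarith [key k]
    linarith
  -- positivity of `P 0`
  have h1 : T₁k 0 = 1 / μ₁ := by
    rw [hT₁k 0, Finset.sum_range_one]
    simp [p1]
  have h2 : T₂k 0 = 1 / μ₂ := by
    rw [hT₂k 0, Finset.sum_range_one, hT₂ 1 0, hTb 0, hT0 1]
    simp [p1]
  have hP0 : 0 < P 0 := by
    rw [hP 0, h1, h2]
    have e1 : C₁ * (1 / μ₁) = C₁ / μ₁ := by ring
    have e2 : C₂ * (1 / μ₂) = C₂ / μ₂ := by ring
    linarith
  refine ⟨step, hP0, ?_⟩
  have anti : Antitone P := antitone_nat_of_succ_le step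
  by_cases hall : ∀ k : ℕ, 0 ≤ P k
  · exact ⟨⊤, le_top, fun k _ => hall k, fun k hk => absurd hk (by simp)⟩
  · push_neg at hall
    have hKspec : P (Nat.find hall) < 0 := Nat.find_spec hall
    refine ⟨(Nat.find hall : ℕ∞), ?_, ?_, ?_⟩
    · have hK0 : Nat.find hall ≠ 0 := by
        intro h
        rw [h] at hKspec
        linarith
      have h1' : 1 ≤ Nat.find hall := Nat.one_le_iff_ne_zero.mpr hK0
      exact_mod_cast h1'
    · intro k hk
      have hk' : k < Nat.find hall := by exact_mod_cast hk
      exact le_of_not_gt (Nat.find_min hall hk')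
    · intro k hk
      have hk' : Nat.find hall ≤ k := by exact_mod_cast hk
      exact lt_of_le_of_lt (anti hk') hKspec
end
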